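/- arXiv:2204.02683 — 5 statements merged into one kernel-verified Lean document; each statement's English description precedes it below -/
import Mathlib

section
/- Let f : X → ℝ^k be any function. Define the spectral contrastive loss L_scl(f) := −2·∑_{x,x'∈X} w(x,x')·f(x)ᵀf(x') + ∑_{x,x'∈X} w(x)·w(x')·(f(x)ᵀf(x'))². Then there exists a constant c ∈ ℝ, depending only on w, k and N (not on f), such that for every f : X → ℝ^k one has L_1(f) = L_scl(f) + c, where L_1 is the generalized spectral contrastive loss with regularization strength σ = 1. -/
open Finset Matrix

/-- The degree `w(x) = ∑_{x'} w(x,x')` of a vertex in the positive-pair graph. -/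
noncomputable def deg {N : ℕ} (w : Fin N → Fin N → ℝ) (x : Fin N) : ℝ := ∑ x', w x x'

/-- The generalized spectral contrastive loss `L_σ(f)`. -/
noncomputable def Lgen {N k : ℕ} (w : Fin N → Fin N → ℝ) (σ : ℝ)
    (f : Fin N → Fin k → ℝ) : ℝ :=
  (∑ x, ∑ x', w x x' * ∑ l, (f x l - f x' l) ^ 2) +
    σ * ∑ a, ∑ b, ((∑ x, deg w x * (f x a * f x b)) - if a = b then (1 : ℝ) else 0) ^ 2

/-- The spectral contrastive loss `L_scl(f)`. -/
noncomputable def Lscl {N k : ℕ} (w : Fin N → Fin N → ℝ) (f : Fin N → Fin k → ℝ) : ℝ :=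
  (-2) * (∑ x, ∑ x', w x x' * ∑ l, f x l * f x' l) +
    ∑ x, ∑ x', deg w x * deg w x' * (∑ l, f x l * f x' l) ^ 2

lemma swap4 {N k : ℕ} (g : Fin k → Fin k → Fin N → Fin N → ℝ) :
    (∑ a, ∑ b, ∑ x, ∑ x', g a b x x') = ∑ x, ∑ x', ∑ a, ∑ b, g a b x x' := by
  calc (∑ a, ∑ b, ∑ x, ∑ x', g a b x x')
      = ∑ a, ∑ x, ∑ b, ∑ x', g a b x x' :=
        Finset.sum_congr rfl fun a _ => Finset.sum_comm
    _ = ∑ x, ∑ a, ∑ b, ∑ x', g a b x x' := Finset.sum_comm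
    _ = ∑ x, ∑ a, ∑ x', ∑ b, g a b x x' :=
        Finset.sum_congr rfl fun x _ => Finset.sum_congr rfl fun a _ =>
          Finset.sum_comm
    _ = ∑ x, ∑ x', ∑ a, ∑ b, g a b x x' :=
        Finset.sum_congr rfl fun x _ => Finset.sum_comm

/-- `L_1(f) = L_scl(f) + c` for a constant `c` independent of `f`. -/
theorem stmt0 {N k : ℕ} (w : Fin N → Fin N → ℝ)
    (hsymm : ∀ x x', w x x' = w x' x)
    (hnonneg : ∀ x x', 0 ≤ w x x')
    (hsum : ∑ x, ∑ x', w x x' = 1)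
    (hdeg : ∀ x, 0 < deg w x) :
    ∃ c : ℝ, ∀ f : Fin N → Fin k → ℝ,
      Lgen w 1 f = Lscl w f + c := by
  refine ⟨(k : ℝ), fun f => ?_⟩
  set P : Fin N → ℝ := fun x => ∑ l, (f x l) ^ 2 with hP
  set Q : Fin N → Fin N → ℝ := fun x x' => ∑ l, f x l * f x' l with hQ
  set M : Fin k → Fin k → ℝ := fun a b => ∑ x, deg w x * (f x a * f x b) with hM
  -- First term
  have hA : (∑ x, ∑ x', w x x' * ∑ l, (f x l - f x' l) ^ 2)
      = 2 * (∑ x, deg w x * P x) - 2 * (∑ x, ∑ x', w x x' * Q x x') := by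
    have e1 : ∀ x x' : Fin N, w x x' * ∑ l, (f x l - f x' l) ^ 2
        = w x x' * P x + w x x' * P x' - 2 * (w x x' * Q x x') := by
      intro x x'
      have : (∑ l, (f x l - f x' l) ^ 2) = P x + P x' - 2 * Q x x' := by
        rw [hP, hQ]
        simp only [Finset.mul_sum, ← Finset.sum_add_distrib, ← Finset.sum_sub_distrib]
        exact Finset.sum_congr rfl fun l _ => by ring
      rw [this]; ring
    calc (∑ x, ∑ x', w x x' * ∑ l, (f x l - f x' l) ^ 2)
        = (∑ x, ∑ x', (w x x' * P x + w x x' * P x' - 2 * (w x x' * Q x x'))) :=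
          Finset.sum_congr rfl fun x _ => Finset.sum_congr rfl fun x' _ => e1 x x'
      _ = (∑ x, ∑ x', w x x' * P x) + (∑ x, ∑ x', w x x' * P x')
            - 2 * (∑ x, ∑ x', w x x' * Q x x') := by
          simp only [Finset.sum_add_distrib, Finset.sum_sub_distrib, Finset.mul_sum]
      _ = 2 * (∑ x, deg w x * P x) - 2 * (∑ x, ∑ x', w x x' * Q x x') := by
          have h1 : (∑ x, ∑ x', w x x' * P x) = ∑ x, deg w x * P x :=
            Finset.sum_congr rfl fun x _ => by rw [deg, Finset.sum_mul]
          have h2 : (∑ x, ∑ x', w x x' * P x') = ∑ x, deg w x * P x := by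
            rw [Finset.sum_comm]
            refine Finset.sum_congr rfl fun x' _ => ?_
            rw [deg, Finset.sum_mul]
            exact Finset.sum_congr rfl fun x _ => by rw [hsymm]
          rw [h1, h2]; ring
  -- Second term
  have hM2 : (∑ a, ∑ b, M a b ^ 2)
      = ∑ x, ∑ x', deg w x * deg w x' * (Q x x') ^ 2 := by
    have e2 : ∀ a b : Fin k, M a b ^ 2
        = ∑ x, ∑ x', (deg w x * (f x a * f x b)) * (deg w x' * (f x' a * f x' b)) := by
      intro a b
      rw [hM, sq, Finset.sum_mul_sum]
    calc (∑ a, ∑ b, M a b ^ 2)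
        = ∑ a, ∑ b, ∑ x, ∑ x',
            (deg w x * (f x a * f x b)) * (deg w x' * (f x' a * f x' b)) :=
          Finset.sum_congr rfl fun a _ => Finset.sum_congr rfl fun b _ => e2 a b
      _ = ∑ x, ∑ x', ∑ a, ∑ b,
            (deg w x * (f x a * f x b)) * (deg w x' * (f x' a * f x' b)) := swap4 _
      _ = ∑ x, ∑ x', deg w x * deg w x' * (Q x x') ^ 2 := by
          refine Finset.sum_congr rfl fun x _ => Finset.sum_congr rfl fun x' _ => ?_
          rw [hQ, sq, Finset.sum_mul_sum, Finset.mul_sum]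
          refine Finset.sum_congr rfl fun a _ => ?_
          rw [Finset.mul_sum]
          exact Finset.sum_congr rfl fun b _ => by ring
  have hMtr : (∑ a, M a a) = ∑ x, deg w x * P x := by
    rw [Finset.sum_comm]
    refine Finset.sum_congr rfl fun x _ => ?_
    rw [hP, Finset.mul_sum]
    exact Finset.sum_congr rfl fun a _ => by rw [sq]
  have hB : (∑ a, ∑ b, ((M a b) - if a = b then (1 : ℝ) else 0) ^ 2)
      = (∑ x, ∑ x', deg w x * deg w x' * (Q x x') ^ 2)
        - 2 * (∑ x, deg w x * P x) + (k : ℝ) := by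
    have e3 : ∀ a b : Fin k, ((M a b) - if a = b then (1 : ℝ) else 0) ^ 2
        = M a b ^ 2 + (if a = b then 1 - 2 * M a b else 0) := by
      intro a b
      by_cases h : a = b <;> simp [h] <;> ring
    calc (∑ a, ∑ b, ((M a b) - if a = b then (1 : ℝ) else 0) ^ 2)
        = ∑ a, ∑ b, (M a b ^ 2 + (if a = b then 1 - 2 * M a b else 0)) :=
          Finset.sum_congr rfl fun a _ => Finset.sum_congr rfl fun b _ => e3 a b
      _ = (∑ a, ∑ b, M a b ^ 2) + ∑ a, (1 - 2 * M a a) := by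
          simp only [Finset.sum_add_distrib]
          congr 1
          refine Finset.sum_congr rfl fun a _ => ?_
          simp [Finset.sum_ite_eq]
      _ = (∑ x, ∑ x', deg w x * deg w x' * (Q x x') ^ 2)
            - 2 * (∑ x, deg w x * P x) + (k : ℝ) := by
          rw [hM2, Finset.sum_sub_distrib, ← Finset.mul_sum, hMtr]
          simp [Finset.card_univ]
          ring
  rw [Lgen, Lscl, hA, hB]
  ring
end

section
/- Let σ > 0 and let f : X → ℝ^k be a minimizer of L_σ over all functions X → ℝ^k. Let F̃ ∈ ℝ^{X×k} be the matrix whose x-th row is √(w(x))·f(x)ᵀ, and set M_σ := (1/σ)·Ā + (1 − 1/σ)·I_N. Then F̃F̃ᵀ is a positive semidefinite matrix of rank at most k, and for every positive semidefinite matrix B ∈ ℝ^{X×X} of rank at most k one has ‖F̃F̃ᵀ − M_σ‖_F ≤ ‖B − M_σ‖_F; that is, F̃F̃ᵀ is a best rank-k positive semidefinite approximation of M_σ in Frobenius norm. -/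
open Finset Matrix

/-- The normalized adjacency matrix `Ā` with entries `w(x,x')/√(w(x)w(x'))`. -/
noncomputable def nadj {N : ℕ} (w : Fin N → Fin N → ℝ) : Matrix (Fin N) (Fin N) ℝ :=
  Matrix.of fun x x' => w x x' / Real.sqrt (deg w x * deg w x')

/-- The matrix `F̃` whose `x`-th row is `√(w(x))·f(x)ᵀ`. -/
noncomputable def Ftil {N k : ℕ} (w : Fin N → Fin N → ℝ) (f : Fin N → Fin k → ℝ) :
    Matrix (Fin N) (Fin k) ℝ :=
  Matrix.of fun x l => Real.sqrt (deg w x) * f x l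

lemma sq_sum_expand {ι : Type*} [Fintype ι] (u : ι → ℝ) :
    (∑ i, u i) ^ 2 = ∑ i, ∑ j, u i * u j := by
  rw [sq, Finset.sum_mul_sum]

lemma key {N k : ℕ} (w : Fin N → Fin N → ℝ)
    (hsymm : ∀ x x', w x x' = w x' x)
    (hdeg : ∀ x, 0 < deg w x)
    (σ : ℝ) (hσ : 0 < σ)
    (f : Fin N → Fin k → ℝ) :
    Lgen w σ f =
      σ * (∑ x, ∑ x',
          ((Ftil w f * (Ftil w f)ᵀ -
            (σ⁻¹ • nadj w + (1 - σ⁻¹) • (1 : Matrix (Fin N) (Fin N) ℝ))) x x') ^ 2)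
      + σ * k
      - σ * (∑ x, ∑ x',
          (((σ⁻¹ • nadj w + (1 - σ⁻¹) • (1 : Matrix (Fin N) (Fin N) ℝ))) x x') ^ 2) := by
  have hd0 : ∀ x, (0:ℝ) ≤ deg w x := fun x => (hdeg x).le
  have hsne : ∀ x, Real.sqrt (deg w x) ≠ 0 := fun x => (Real.sqrt_pos.2 (hdeg x)).ne'
  have hss : ∀ x, Real.sqrt (deg w x) * Real.sqrt (deg w x) = deg w x :=
    fun x => Real.mul_self_sqrt (hd0 x)
  set M := σ⁻¹ • nadj w + (1 - σ⁻¹) • (1 : Matrix (Fin N) (Fin N) ℝ) with hMdef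
  set P := Ftil w f * (Ftil w f)ᵀ with hPdef
  set T := ∑ x, ∑ x', w x x' * ∑ l, f x l * f x' l with hTdef
  set trQ := ∑ x, deg w x * ∑ l, (f x l)^2 with htrQdef
  set SQ := ∑ a, ∑ b, (∑ x, deg w x * (f x a * f x b))^2 with hSQdef
  set SM := ∑ x, ∑ x', (M x x')^2 with hSMdef
  -- entry formulas
  have hP : ∀ x x', P x x' = Real.sqrt (deg w x) * Real.sqrt (deg w x') * ∑ l, f x l * f x' l := by
    intro x x'
    rw [hPdef]
    simp only [Matrix.mul_apply, Matrix.transpose_apply, Ftil, Matrix.of_apply]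
    rw [Finset.mul_sum]
    exact Finset.sum_congr rfl fun l _ => by ring
  have hM : ∀ x x', M x x' =
      σ⁻¹ * (w x x' / (Real.sqrt (deg w x) * Real.sqrt (deg w x'))) +
        (1 - σ⁻¹) * (if x = x' then 1 else 0) := by
    intro x x'
    rw [hMdef]
    simp only [Matrix.add_apply, Matrix.smul_apply, nadj, Matrix.of_apply, Matrix.one_apply,
      smul_eq_mul, Real.sqrt_mul (hd0 x)]
  -- (P x x')^2
  have hP2 : ∀ x x', (P x x')^2 = deg w x * deg w x' * (∑ l, f x l * f x' l)^2 := by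
    intro x x'
    rw [hP, mul_pow, mul_pow, Real.sq_sqrt (hd0 x), Real.sq_sqrt (hd0 x')]
  -- P x x' * M x x'
  have hPM : ∀ x x', P x x' * M x x' =
      σ⁻¹ * (w x x' * ∑ l, f x l * f x' l) +
        (1 - σ⁻¹) * (if x = x' then deg w x * ∑ l, (f x l)^2 else 0) := by
    intro x x'
    rw [hP, hM]
    by_cases hxx : x = x'
    · subst hxx
      simp only [eq_self_iff_true, if_true, mul_one]
      have hsq : (∑ l, f x l * f x l) = ∑ l, (f x l)^2 :=
        Finset.sum_congr rfl fun l _ => (sq (f x l)).symm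
      rw [hsq]
      have hc : Real.sqrt (deg w x) * Real.sqrt (deg w x) ≠ 0 :=
        mul_ne_zero (hsne x) (hsne x)
      have e : (Real.sqrt (deg w x) * Real.sqrt (deg w x) * ∑ l, (f x l)^2) *
          (σ⁻¹ * (w x x / (Real.sqrt (deg w x) * Real.sqrt (deg w x))) + (1 - σ⁻¹))
          = σ⁻¹ * (w x x * ∑ l, (f x l)^2) *
              ((Real.sqrt (deg w x) * Real.sqrt (deg w x)) /
                (Real.sqrt (deg w x) * Real.sqrt (deg w x)))
            + (1 - σ⁻¹) * (Real.sqrt (deg w x) * Real.sqrt (deg w x) * ∑ l, (f x l)^2) := by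
        ring
      rw [e, div_self hc, mul_one, hss x]
    · simp only [if_neg hxx, mul_zero, add_zero]
      have hc : Real.sqrt (deg w x) * Real.sqrt (deg w x') ≠ 0 :=
        mul_ne_zero (hsne x) (hsne x')
      have e : (Real.sqrt (deg w x) * Real.sqrt (deg w x') * ∑ l, f x l * f x' l) *
          (σ⁻¹ * (w x x' / (Real.sqrt (deg w x) * Real.sqrt (deg w x'))))
          = σ⁻¹ * (w x x' * ∑ l, f x l * f x' l) *
              ((Real.sqrt (deg w x) * Real.sqrt (deg w x')) /
                (Real.sqrt (deg w x) * Real.sqrt (deg w x'))) := by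
        ring
      rw [e, div_self hc, mul_one]
  -- SP = SQ
  have hSPSQ : (∑ x, ∑ x', deg w x * deg w x' * (∑ l, f x l * f x' l)^2) = SQ := by
    have lhs_eq : (∑ x, ∑ x', deg w x * deg w x' * (∑ l, f x l * f x' l)^2)
        = ∑ x, ∑ x', ∑ a, ∑ b,
            (deg w x * (f x a * f x b)) * (deg w x' * (f x' a * f x' b)) := by
      refine Finset.sum_congr rfl fun x _ => Finset.sum_congr rfl fun x' _ => ?_
      rw [sq_sum_expand]
      simp only [Finset.mul_sum]
      refine Finset.sum_congr rfl fun a _ => Finset.sum_congr rfl fun b _ => by ring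
    rw [lhs_eq, hSQdef]
    have rhs_eq : (∑ a, ∑ b, (∑ x, deg w x * (f x a * f x b))^2)
        = ∑ a, ∑ b, ∑ x, ∑ x',
            (deg w x * (f x a * f x b)) * (deg w x' * (f x' a * f x' b)) := by
      refine Finset.sum_congr rfl fun a _ => Finset.sum_congr rfl fun b _ => ?_
      rw [sq_sum_expand]
    rw [rhs_eq]
    -- reorder sums
    rw [show (∑ x, ∑ x', ∑ a, ∑ b,
            (deg w x * (f x a * f x b)) * (deg w x' * (f x' a * f x' b)))
        = ∑ x, ∑ a, ∑ x', ∑ b,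
            (deg w x * (f x a * f x b)) * (deg w x' * (f x' a * f x' b)) from
      Finset.sum_congr rfl fun x _ => Finset.sum_comm]
    rw [Finset.sum_comm]
    refine Finset.sum_congr rfl fun a _ => ?_
    rw [show (∑ x, ∑ x', ∑ b,
            (deg w x * (f x a * f x b)) * (deg w x' * (f x' a * f x' b)))
        = ∑ x, ∑ b, ∑ x',
            (deg w x * (f x a * f x b)) * (deg w x' * (f x' a * f x' b)) from
      Finset.sum_congr rfl fun x _ => Finset.sum_comm]
    exact Finset.sum_comm
  -- first loss term
  have h1 : (∑ x, ∑ x', w x x' * ∑ l, (f x l - f x' l)^2) = 2*trQ - 2*T := by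
    have hin : ∀ x x', (∑ l, (f x l - f x' l)^2)
        = (∑ l, (f x l)^2) + (∑ l, (f x' l)^2) - 2 * ∑ l, f x l * f x' l := by
      intro x x'
      rw [Finset.mul_sum, ← Finset.sum_add_distrib, ← Finset.sum_sub_distrib]
      exact Finset.sum_congr rfl fun l _ => by ring
    have hsplit : (∑ x, ∑ x', w x x' * ∑ l, (f x l - f x' l)^2)
        = (∑ x, ∑ x', w x x' * ∑ l, (f x l)^2)
          + (∑ x, ∑ x', w x x' * ∑ l, (f x' l)^2)
          - 2 * T := by
      rw [hTdef, Finset.mul_sum, ← Finset.sum_add_distrib, ← Finset.sum_sub_distrib]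
      refine Finset.sum_congr rfl fun x _ => ?_
      rw [Finset.mul_sum, ← Finset.sum_add_distrib, ← Finset.sum_sub_distrib]
      refine Finset.sum_congr rfl fun x' _ => ?_
      rw [hin]
      ring
    rw [hsplit]
    have e1 : (∑ x, ∑ x', w x x' * ∑ l, (f x l)^2) = trQ := by
      rw [htrQdef]
      refine Finset.sum_congr rfl fun x _ => ?_
      rw [← Finset.sum_mul, deg]
    have e2 : (∑ x, ∑ x', w x x' * ∑ l, (f x' l)^2) = trQ := by
      rw [Finset.sum_comm, htrQdef]
      refine Finset.sum_congr rfl fun x' _ => ?_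
      rw [← Finset.sum_mul]
      congr 1
      rw [deg]
      exact Finset.sum_congr rfl fun x _ => hsymm x x'
    rw [e1, e2]
    ring
  -- second loss term
  have h2 : (∑ a, ∑ b, ((∑ x, deg w x * (f x a * f x b)) - if a = b then (1:ℝ) else 0)^2)
      = SQ - 2*trQ + k := by
    have hent : ∀ a b : Fin k, ((∑ x, deg w x * (f x a * f x b)) - if a = b then (1:ℝ) else 0)^2
        = (∑ x, deg w x * (f x a * f x b))^2
          - 2 * (if a = b then (∑ x, deg w x * (f x a * f x b)) else 0)
          + (if a = b then 1 else 0) := by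
      intro a b
      by_cases hab : a = b
      · simp only [if_pos hab]; ring
      · simp only [if_neg hab]; ring
    rw [show (∑ a, ∑ b, ((∑ x, deg w x * (f x a * f x b)) - if a = b then (1:ℝ) else 0)^2)
        = ∑ a, ∑ b, ((∑ x, deg w x * (f x a * f x b))^2
          - 2 * (if a = b then (∑ x, deg w x * (f x a * f x b)) else 0)
          + (if a = b then 1 else 0)) from
      Finset.sum_congr rfl fun a _ => Finset.sum_congr rfl fun b _ => hent a b]
    simp only [Finset.sum_add_distrib, Finset.sum_sub_distrib]
    have i1 : (∑ a : Fin k, ∑ b : Fin k,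
        2 * (if a = b then (∑ x, deg w x * (f x a * f x b)) else 0)) = 2 * trQ := by
      rw [show (∑ a : Fin k, ∑ b : Fin k,
          2 * (if a = b then (∑ x, deg w x * (f x a * f x b)) else 0))
          = ∑ a : Fin k, 2 * (∑ x, deg w x * (f x a * f x a)) from
        Finset.sum_congr rfl fun a _ => by
          rw [← Finset.mul_sum]
          congr 1
          rw [Finset.sum_ite_eq]
          simp]
      rw [← Finset.mul_sum, htrQdef]
      congr 1
      rw [Finset.sum_comm]
      refine Finset.sum_congr rfl fun x _ => ?_
      rw [Finset.mul_sum]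
      exact Finset.sum_congr rfl fun a _ => by ring
    have i2 : (∑ a : Fin k, ∑ b : Fin k, (if a = b then (1:ℝ) else 0)) = k := by
      rw [show (∑ a : Fin k, ∑ b : Fin k, (if a = b then (1:ℝ) else 0))
          = ∑ a : Fin k, (1:ℝ) from
        Finset.sum_congr rfl fun a _ => by rw [Finset.sum_ite_eq]; simp]
      simp
    rw [i1, i2, hSQdef]
  -- the Frobenius distance
  have h3 : (∑ x, ∑ x', ((P - M) x x')^2)
      = SQ - 2*(σ⁻¹*T + (1-σ⁻¹)*trQ) + SM := by
    have hent : ∀ x x', ((P - M) x x')^2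
        = (P x x')^2 - 2 * (P x x' * M x x') + (M x x')^2 := by
      intro x x'
      rw [Matrix.sub_apply]
      ring
    rw [show (∑ x, ∑ x', ((P - M) x x')^2)
        = ∑ x, ∑ x', ((P x x')^2 - 2 * (P x x' * M x x') + (M x x')^2) from
      Finset.sum_congr rfl fun x _ => Finset.sum_congr rfl fun x' _ => hent x x']
    simp only [Finset.sum_add_distrib, Finset.sum_sub_distrib]
    have j1 : (∑ x, ∑ x', (P x x')^2) = SQ := by
      rw [← hSPSQ]
      exact Finset.sum_congr rfl fun x _ => Finset.sum_congr rfl fun x' _ => hP2 x x'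
    have j2 : (∑ x, ∑ x', 2 * (P x x' * M x x')) = 2*(σ⁻¹*T + (1-σ⁻¹)*trQ) := by
      rw [show (∑ x, ∑ x', 2 * (P x x' * M x x'))
          = ∑ x, ∑ x', (2*σ⁻¹ * (w x x' * ∑ l, f x l * f x' l) +
              2*(1 - σ⁻¹) * (if x = x' then deg w x * ∑ l, (f x l)^2 else 0)) from
        Finset.sum_congr rfl fun x _ => Finset.sum_congr rfl fun x' _ => by
          rw [hPM x x']; ring]
      simp only [Finset.sum_add_distrib]
      have k1 : (∑ x, ∑ x', 2*σ⁻¹ * (w x x' * ∑ l, f x l * f x' l)) = 2*σ⁻¹*T := by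
        rw [hTdef, Finset.mul_sum]
        refine Finset.sum_congr rfl fun x _ => ?_
        rw [Finset.mul_sum]
      have k2 : (∑ x, ∑ x',
          2*(1 - σ⁻¹) * (if x = x' then deg w x * ∑ l, (f x l)^2 else 0))
          = 2*(1-σ⁻¹)*trQ := by
        rw [htrQdef, Finset.mul_sum]
        refine Finset.sum_congr rfl fun x _ => ?_
        rw [← Finset.mul_sum]
        congr 1
        rw [Finset.sum_ite_eq]
        simp
      rw [k1, k2]
      ring
    rw [j1, j2, hSMdef]
  -- combine
  rw [Lgen, h1, h2, h3]
  have hσ1 : σ * σ⁻¹ = 1 := mul_inv_cancel₀ hσ.ne'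
  linear_combination (2*T - 2*trQ) * hσ1

lemma psd_factor {N k : ℕ} (B : Matrix (Fin N) (Fin N) ℝ) (hB : B.PosSemidef)
    (hr : B.rank ≤ k) : ∃ G : Matrix (Fin N) (Fin k) ℝ, B = G * Gᵀ := by
  classical
  have hA : B.IsHermitian := hB.1
  have hcard : Fintype.card {i // hA.eigenvalues i ≠ 0} ≤ Fintype.card (Fin k) := by
    rw [← hA.rank_eq_card_non_zero_eigs, Fintype.card_fin]; exact hr
  obtain ⟨e⟩ := Function.Embedding.nonempty_iff_card_le.2 hcard
  set U : Matrix (Fin N) (Fin N) ℝ := (hA.eigenvectorUnitary : Matrix (Fin N) (Fin N) ℝ)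
  set lam := hA.eigenvalues
  set C : Matrix (Fin N) (Fin k) ℝ :=
    Matrix.of (fun i l => if h : lam i ≠ 0 then (if e ⟨i, h⟩ = l then 1 else 0) else 0)
  have hCC : C * Cᵀ = Matrix.diagonal (fun i => if lam i ≠ 0 then (1:ℝ) else 0) := by
    ext i j
    simp only [Matrix.mul_apply, Matrix.transpose_apply, Matrix.diagonal_apply, C, Matrix.of_apply]
    by_cases hi : lam i ≠ 0
    · by_cases hj : lam j ≠ 0
      · simp only [dif_pos hi, dif_pos hj, ite_mul, one_mul, zero_mul]
        rw [Finset.sum_ite_eq]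
        by_cases hij : i = j
        · subst hij; simp [hi]
        · have : e ⟨j, hj⟩ ≠ e ⟨i, hi⟩ := by
            intro h
            exact hij (congrArg Subtype.val (e.injective h)).symm
          simp [if_neg this, if_neg hij, hi, Ne.symm hij]
      · have hij : i ≠ j := fun h => hj (h ▸ hi)
        push_neg at hj
        simp [dif_neg, hj, hij]
    · simp only [dif_neg hi, zero_mul, Finset.sum_const_zero]
      by_cases hij : i = j
      · subst hij; simp [hi]
      · simp [hij]
  refine ⟨U * Matrix.diagonal (fun i => Real.sqrt (lam i)) * C, ?_⟩
  have hT : (U * Matrix.diagonal (fun i => Real.sqrt (lam i)) * C)ᵀ =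
      Cᵀ * Matrix.diagonal (fun i => Real.sqrt (lam i)) * Uᵀ := by
    simp [Matrix.transpose_mul, Matrix.diagonal_transpose, Matrix.mul_assoc]
  rw [hT]
  have : U * Matrix.diagonal (fun i => Real.sqrt (lam i)) * C *
      (Cᵀ * Matrix.diagonal (fun i => Real.sqrt (lam i)) * Uᵀ) =
      U * (Matrix.diagonal (fun i => Real.sqrt (lam i)) * (C * Cᵀ) *
        Matrix.diagonal (fun i => Real.sqrt (lam i))) * Uᵀ := by
    simp only [Matrix.mul_assoc]
  rw [this, hCC]
  have hdiag : Matrix.diagonal (fun i => Real.sqrt (lam i)) *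
      Matrix.diagonal (fun i => if lam i ≠ 0 then (1:ℝ) else 0) *
      Matrix.diagonal (fun i => Real.sqrt (lam i)) = Matrix.diagonal lam := by
    rw [Matrix.diagonal_mul_diagonal, Matrix.diagonal_mul_diagonal]
    have hfun : ∀ i, Real.sqrt (lam i) * (if lam i ≠ 0 then (1:ℝ) else 0) * Real.sqrt (lam i)
        = lam i := by
      intro i
      by_cases hi : lam i = 0
      · simp [hi]
      · simp only [hi, if_neg, ne_eq, not_false_iff, if_true, mul_one]
        exact Real.mul_self_sqrt (hB.eigenvalues_nonneg i)
    exact congrArg Matrix.diagonal (funext hfun)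
  rw [hdiag]
  conv_lhs => rw [hA.spectral_theorem]
  congr 1

/-- If `f` minimizes `L_σ`, then `F̃F̃ᵀ` is a best rank-`k` PSD
approximation of `M_σ = (1/σ)Ā + (1−1/σ)I` in Frobenius norm. -/
theorem stmt2 {N k : ℕ} (w : Fin N → Fin N → ℝ)
    (hsymm : ∀ x x', w x x' = w x' x)
    (hnonneg : ∀ x x', 0 ≤ w x x')
    (hsum : ∑ x, ∑ x', w x x' = 1)
    (hdeg : ∀ x, 0 < deg w x)
    (σ : ℝ) (hσ : 0 < σ)
    (f : Fin N → Fin k → ℝ)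
    (hmin : ∀ g : Fin N → Fin k → ℝ, Lgen w σ f ≤ Lgen w σ g) :
    (Ftil w f * (Ftil w f)ᵀ).PosSemidef ∧
    (Ftil w f * (Ftil w f)ᵀ).rank ≤ k ∧
    ∀ B : Matrix (Fin N) (Fin N) ℝ, B.PosSemidef → B.rank ≤ k →
      Real.sqrt (∑ x, ∑ x',
          ((Ftil w f * (Ftil w f)ᵀ -
            (σ⁻¹ • nadj w + (1 - σ⁻¹) • (1 : Matrix (Fin N) (Fin N) ℝ))) x x') ^ 2)
        ≤ Real.sqrt (∑ x, ∑ x',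
          ((B - (σ⁻¹ • nadj w + (1 - σ⁻¹) • (1 : Matrix (Fin N) (Fin N) ℝ))) x x') ^ 2) := by
  
  have hsne : ∀ x, Real.sqrt (deg w x) ≠ 0 := fun x => (Real.sqrt_pos.2 (hdeg x)).ne'
  have h1 : (Ftil w f * (Ftil w f)ᵀ).PosSemidef := by
    have := Matrix.posSemidef_self_mul_conjTranspose (Ftil w f)
    rwa [Matrix.conjTranspose_eq_transpose_of_trivial] at this
  have h2 : (Ftil w f * (Ftil w f)ᵀ).rank ≤ k :=
    le_trans (Matrix.rank_mul_le_left _ _)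
      (by simpa using Matrix.rank_le_card_width (Ftil w f))
  refine ⟨h1, h2, ?_⟩
  intro B hB hrB
  obtain ⟨G, hG⟩ := psd_factor B hB hrB
  set g : Fin N → Fin k → ℝ := fun x l => G x l / Real.sqrt (deg w x) with hgdef
  have hFg : Ftil w g = G := by
    ext x l
    simp only [Ftil, Matrix.of_apply, hgdef]
    rw [mul_comm, div_mul_cancel₀ _ (hsne x)]
  have key_f := key w hsymm hdeg σ hσ f
  have key_g := key w hsymm hdeg σ hσ g
  have hle := hmin g
  rw [key_f, key_g, hFg, ← hG] at hle
  have hS : (∑ x, ∑ x',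
      ((Ftil w f * (Ftil w f)ᵀ -
        (σ⁻¹ • nadj w + (1 - σ⁻¹) • (1 : Matrix (Fin N) (Fin N) ℝ))) x x') ^ 2)
      ≤ (∑ x, ∑ x',
      ((B - (σ⁻¹ • nadj w + (1 - σ⁻¹) • (1 : Matrix (Fin N) (Fin N) ℝ))) x x') ^ 2) := by
    have := sub_nonneg.2 hle
    nlinarith [this]
  exact Real.sqrt_le_sqrt hS
end

section
/- Let i ∈ [m] and let h_i ∈ ℝ^X be the vector with (h_i)_x = √(w(x)) if x ∈ C_i and (h_i)_x = 0 otherwise. Then h_iᵀ L² h_i ≤ 2α²·‖h_i‖₂². -/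
open Finset Matrix

/-- The vector with entry `√(w(x))` on a subset `A` and `0` elsewhere. -/
noncomputable def hvec {N : ℕ} (w : Fin N → Fin N → ℝ) (A : Finset (Fin N)) :
    Fin N → ℝ :=
  fun x => if x ∈ A then Real.sqrt (deg w x) else 0

/-- `h_iᵀ L² h_i ≤ 2α²·‖h_i‖₂²` where `L = I − Ā`. -/
theorem stmt3 {N m : ℕ} (w : Fin N → Fin N → ℝ)
    (hsymm : ∀ x x', w x x' = w x' x)
    (hnonneg : ∀ x x', 0 ≤ w x x')
    (hsum : ∑ x, ∑ x', w x x' = 1)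
    (hdeg : ∀ x, 0 < deg w x)
    (C : Fin m → Finset (Fin N))
    (hpart : ∀ x : Fin N, ∃! i : Fin m, x ∈ C i)
    (hne : ∀ i : Fin m, (C i).Nonempty)
    (α : ℝ) (hα0 : 0 < α) (hα1 : α < 1)
    (hexp : ∀ i : Fin m, ∀ x ∈ C i, (∑ x' ∈ (C i)ᶜ, w x x') ≤ α * deg w x)
    (i : Fin m) :
    hvec w (C i) ⬝ᵥ (((1 - nadj w) ^ 2) *ᵥ hvec w (C i)) ≤
      2 * α ^ 2 * ∑ x, hvec w (C i) x ^ 2 := by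
  classical
  set A := C i with hA
  set h := hvec w A with hh
  have hdpos : ∀ x, 0 < deg w x := hdeg
  have hsq : ∀ x, (0:ℝ) < Real.sqrt (deg w x) := fun x => Real.sqrt_pos.2 (hdpos x)
  set s : Fin N → ℝ := fun x => if x ∈ A then ∑ x' ∈ Aᶜ, w x x' else ∑ x' ∈ A, w x x'
    with hsdef
  have hs_nonneg : ∀ x, 0 ≤ s x := by
    intro x; simp only [hsdef]
    split <;> exact Finset.sum_nonneg fun _ _ => hnonneg _ _
  have hs_le : ∀ x, s x ≤ α * deg w x := by
    intro x
    by_cases hx : x ∈ A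
    · simpa [hsdef, hx] using hexp i x hx
    · simp only [hsdef, if_neg hx]
      obtain ⟨j, hj, _⟩ := hpart x
      have hij : j ≠ i := by rintro rfl; exact hx hj
      have hji : A ⊆ (C j)ᶜ := fun y hy => Finset.mem_compl.2 fun hyj =>
        hij ((hpart y).unique hyj hy)
      calc ∑ x' ∈ A, w x x' ≤ ∑ x' ∈ (C j)ᶜ, w x x' :=
            Finset.sum_le_sum_of_subset_of_nonneg hji (fun _ _ _ => hnonneg _ _)
        _ ≤ α * deg w x := hexp j x hj
  -- the vector L h
  have hmul : ∀ x, ((1 - nadj w) *ᵥ h) x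
      = h x - (∑ x' ∈ A, w x x') / Real.sqrt (deg w x) := by
    intro x
    rw [Matrix.sub_mulVec, Matrix.one_mulVec]
    have hterm : ∀ x', nadj w x x' * h x'
        = if x' ∈ A then w x x' / Real.sqrt (deg w x) else 0 := by
      intro x'
      by_cases hx' : x' ∈ A
      · simp only [hh, hvec, if_pos hx', nadj, Matrix.of_apply]
        rw [Real.sqrt_mul (hdpos x).le]
        field_simp
        rw [mul_comm (Real.sqrt (deg w x)) (Real.sqrt (deg w x')), mul_comm (w x x') (Real.sqrt (deg w x')), mul_div_mul_left _ _ (hsq x').ne']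
      · simp [hh, hvec, hx']
    have : (nadj w *ᵥ h) x = (∑ x' ∈ A, w x x') / Real.sqrt (deg w x) := by
      show (∑ x', nadj w x x' * h x') = _
      simp_rw [hterm]
      rw [Finset.sum_ite_mem, Finset.univ_inter, Finset.sum_div]
    rw [Pi.sub_apply, this]
  have hg2 : ∀ x, (((1 - nadj w) *ᵥ h) x) ^ 2 = s x ^ 2 / deg w x := by
    intro x
    rw [hmul x]
    by_cases hx : x ∈ A
    · have hdecomp : deg w x = (∑ x' ∈ A, w x x') + ∑ x' ∈ Aᶜ, w x x' :=
        (Finset.sum_add_sum_compl A _).symm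
      have hval : h x - (∑ x' ∈ A, w x x') / Real.sqrt (deg w x)
          = s x / Real.sqrt (deg w x) := by
        simp only [hh, hvec, if_pos hx, hsdef]
        rw [eq_div_iff (hsq x).ne', sub_mul, div_mul_cancel₀ _ (hsq x).ne',
          Real.mul_self_sqrt (hdpos x).le]
        linarith [hdecomp]
      rw [hval, div_pow, Real.sq_sqrt (hdpos x).le]
    · have hval : h x - (∑ x' ∈ A, w x x') / Real.sqrt (deg w x)
          = -(s x / Real.sqrt (deg w x)) := by
        simp only [hh, hvec, if_neg hx, hsdef]
        ring
      rw [hval, neg_pow, div_pow, Real.sq_sqrt (hdpos x).le]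
      ring
  -- rewrite LHS as sum of squares
  have hsymmL : (1 - nadj w)ᵀ = 1 - nadj w := by
    rw [Matrix.transpose_sub, Matrix.transpose_one]
    congr 1
    ext x x'
    simp [nadj, hsymm x x', mul_comm]
  have hLHS : h ⬝ᵥ (((1 - nadj w) ^ 2) *ᵥ h)
      = ∑ x, (((1 - nadj w) *ᵥ h) x) ^ 2 := by
    rw [sq, ← Matrix.mulVec_mulVec, Matrix.dotProduct_mulVec]
    have : h ᵥ* (1 - nadj w) = (1 - nadj w) *ᵥ h := by
      rw [← hsymmL, Matrix.vecMul_transpose, hsymmL]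
    rw [this]
    simp [dotProduct, sq]
  rw [hLHS]
  simp_rw [hg2]
  -- RHS norm
  have hnorm : ∑ x, h x ^ 2 = ∑ x ∈ A, deg w x := by
    have : ∀ x, h x ^ 2 = if x ∈ A then deg w x else 0 := by
      intro x
      by_cases hx : x ∈ A <;>
        simp [hh, hvec, hx, Real.sq_sqrt (hdpos x).le]
    simp_rw [this]
    rw [Finset.sum_ite_mem, Finset.univ_inter]
  -- total
  have hT : ∑ x, s x = 2 * ∑ x ∈ A, ∑ x' ∈ Aᶜ, w x x' := by
    rw [← Finset.sum_add_sum_compl A s]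
    have h1 : ∑ x ∈ A, s x = ∑ x ∈ A, ∑ x' ∈ Aᶜ, w x x' :=
      Finset.sum_congr rfl fun x hx => by simp [hsdef, hx]
    have h2 : ∑ x ∈ Aᶜ, s x = ∑ x ∈ A, ∑ x' ∈ Aᶜ, w x x' := by
      have : ∑ x ∈ Aᶜ, s x = ∑ x ∈ Aᶜ, ∑ x' ∈ A, w x x' :=
        Finset.sum_congr rfl fun x hx => by
          simp [hsdef, (Finset.mem_compl.1 hx)]
      rw [this, Finset.sum_comm]
      exact Finset.sum_congr rfl fun x _ => Finset.sum_congr rfl fun x' _ => hsymm _ _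
    rw [h1, h2]; ring
  have hTle : ∑ x, s x ≤ 2 * α * ∑ x ∈ A, deg w x := by
    rw [hT]
    have : ∑ x ∈ A, ∑ x' ∈ Aᶜ, w x x' ≤ ∑ x ∈ A, α * deg w x :=
      Finset.sum_le_sum fun x hx => hexp i x hx
    rw [← Finset.mul_sum] at this
    linarith
  calc ∑ x, s x ^ 2 / deg w x ≤ ∑ x, α * s x := by
        apply Finset.sum_le_sum
        intro x _
        rw [div_le_iff₀ (hdpos x)]
        nlinarith [hs_le x, hs_nonneg x, hdpos x]
    _ = α * ∑ x, s x := by rw [Finset.mul_sum]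
    _ ≤ α * (2 * α * ∑ x ∈ A, deg w x) :=
        mul_le_mul_of_nonneg_left hTle hα0.le
    _ = 2 * α ^ 2 * ∑ x, h x ^ 2 := by rw [hnorm]; ring
end

section
/- Let u_1,…,u_N be an orthonormal eigenbasis of the Laplacian L with L u_j = λ_j u_j, where 0 ≤ λ_1 ≤ … ≤ λ_N are the eigenvalues of L listed with multiplicity, and let Π_k denote the orthogonal projection onto span(u_1,…,u_k). Assume λ_{k+1} > 0. Then for every i ∈ [m], letting h_i ∈ ℝ^X be the vector with (h_i)_x = √(w(x)) if x ∈ C_i and 0 otherwise, one has ‖h_i − Π_k h_i‖₂² ≤ (2α²/λ_{k+1}²)·‖h_i‖₂². -/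
open Finset Matrix

/-- The orthogonal projection onto the span of the first `k` vectors `u_1,…,u_k`
(indices `j` with `(j : ℕ) < k`) of an orthonormal basis `u`. -/
noncomputable def projK {N : ℕ} (k : ℕ) (u : Fin N → Fin N → ℝ) (h : Fin N → ℝ) :
    Fin N → ℝ :=
  fun x => ∑ j ∈ Finset.univ.filter (fun j : Fin N => (j : ℕ) < k),
    (∑ y, u j y * h y) * u j x

lemma sumsq_ortho {N : ℕ} (u : Fin N → Fin N → ℝ)
    (horth : ∀ j j' : Fin N, (∑ x, u j x * u j' x) = if j = j' then (1 : ℝ) else 0)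
    (T : Finset (Fin N)) (c : Fin N → ℝ) :
    ∑ x, (∑ j ∈ T, c j * u j x) ^ 2 = ∑ j ∈ T, c j ^ 2 := by
  calc ∑ x, (∑ j ∈ T, c j * u j x) ^ 2
      = ∑ x, ∑ j ∈ T, ∑ j' ∈ T, (c j * u j x) * (c j' * u j' x) := by
        simp [sq, Finset.sum_mul_sum]
    _ = ∑ j ∈ T, ∑ j' ∈ T, (c j * c j') * ∑ x, u j x * u j' x := by
        rw [Finset.sum_comm]
        refine Finset.sum_congr rfl fun j _ => ?_
        rw [Finset.sum_comm]
        refine Finset.sum_congr rfl fun j' _ => ?_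
        rw [Finset.mul_sum]
        exact Finset.sum_congr rfl fun x _ => by ring
    _ = ∑ j ∈ T, c j ^ 2 := by
        refine Finset.sum_congr rfl fun j hj => ?_
        simp only [horth, mul_ite, mul_one, mul_zero]
        rw [Finset.sum_ite_eq T j (fun x => c j * c x), if_pos hj]
        ring

lemma complete {N : ℕ} (u : Fin N → Fin N → ℝ)
    (horth : ∀ j j' : Fin N, (∑ x, u j x * u j' x) = if j = j' then (1 : ℝ) else 0) :
    ∀ x y : Fin N, (∑ j, u j x * u j y) = if x = y then (1 : ℝ) else 0 := by
  have h1 : (Matrix.of u) * (Matrix.of u)ᵀ = 1 := by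
    ext j j'
    simpa [Matrix.mul_apply, Matrix.one_apply] using horth j j'
  have h2 : (Matrix.of u)ᵀ * (Matrix.of u) = 1 := mul_eq_one_comm.mp h1
  intro x y
  have := congrFun (congrFun h2 x) y
  simpa [Matrix.mul_apply, Matrix.one_apply] using this


/-- `‖h_i − Π_k h_i‖₂² ≤ (2α²/λ_{k+1}²)·‖h_i‖₂²`. -/
theorem stmt4 {N m k : ℕ} (w : Fin N → Fin N → ℝ)
    (hsymm : ∀ x x', w x x' = w x' x)
    (hnonneg : ∀ x x', 0 ≤ w x x')
    (hsum : ∑ x, ∑ x', w x x' = 1)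
    (hdeg : ∀ x, 0 < deg w x)
    (C : Fin m → Finset (Fin N))
    (hpart : ∀ x : Fin N, ∃! i : Fin m, x ∈ C i)
    (hne : ∀ i : Fin m, (C i).Nonempty)
    (α : ℝ) (hα0 : 0 < α) (hα1 : α < 1)
    (hexp : ∀ i : Fin m, ∀ x ∈ C i, (∑ x' ∈ (C i)ᶜ, w x x') ≤ α * deg w x)
    -- an orthonormal eigenbasis of the Laplacian `L = I − Ā` with
    -- eigenvalues listed in nondecreasing order
    (lam : Fin N → ℝ) (u : Fin N → Fin N → ℝ)
    (horth : ∀ j j' : Fin N, (∑ x, u j x * u j' x) = if j = j' then (1 : ℝ) else 0)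
    (heig : ∀ j : Fin N, ((1 - nadj w) *ᵥ u j) = lam j • u j)
    (hmono : Monotone lam)
    (hlam0 : ∀ j, 0 ≤ lam j)
    (hk : k < N)
    (hlamk : 0 < lam ⟨k, hk⟩) :
    ∀ i : Fin m,
      (∑ x, (hvec w (C i) x - projK k u (hvec w (C i)) x) ^ 2) ≤
        (2 * α ^ 2 / (lam ⟨k, hk⟩) ^ 2) * ∑ x, hvec w (C i) x ^ 2 := by
  intro i
  set A := C i with hA
  set h : Fin N → ℝ := hvec w A with hh
  set c : Fin N → ℝ := fun j => ∑ y, u j y * h y with hc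
  set lamK := lam ⟨k, hk⟩ with hlamK
  have hcomp := complete u horth
  -- expansion of h in the eigenbasis
  have hexpand : ∀ x, h x = ∑ j, c j * u j x := by
    intro x
    refine Eq.symm ?_
    calc ∑ j, c j * u j x = ∑ j, ∑ y, (u j y * h y) * u j x := by
          simp [hc, Finset.sum_mul]
      _ = ∑ y, ∑ j, (u j y * h y) * u j x := Finset.sum_comm
      _ = ∑ y, h y * ∑ j, u j y * u j x := by
          refine Finset.sum_congr rfl fun y _ => ?_
          rw [Finset.mul_sum]
          exact Finset.sum_congr rfl fun j _ => by ring
      _ = h x := by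
          simp only [hcomp]
          simp
  -- the tail set T
  set T : Finset (Fin N) := Finset.univ.filter (fun j : Fin N => ¬ (j : ℕ) < k) with hT
  have hdiff : ∀ x, h x - projK k u h x = ∑ j ∈ T, c j * u j x := by
    intro x
    have hsplit := Finset.sum_filter_add_sum_filter_not Finset.univ
      (fun j : Fin N => (j : ℕ) < k) (fun j => c j * u j x)
    rw [hexpand x, projK]
    have : (fun j : Fin N => (∑ y, u j y * h y) * u j x) = fun j => c j * u j x := rfl
    rw [this]
    linarith [hsplit]
  have hdiffsum : (∑ x, (h x - projK k u h x) ^ 2) = ∑ j ∈ T, c j ^ 2 := by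
    calc (∑ x, (h x - projK k u h x) ^ 2) = ∑ x, (∑ j ∈ T, c j * u j x) ^ 2 := by
          exact Finset.sum_congr rfl fun x _ => by rw [hdiff x]
      _ = ∑ j ∈ T, c j ^ 2 := sumsq_ortho u horth T c
  -- spectral expansion of L h
  set g : Fin N → ℝ := (1 - nadj w) *ᵥ h with hg
  have hsumfun : h = ∑ j, c j • u j := by
    funext x
    rw [hexpand x]
    simp [Finset.sum_apply]
  have hgspec : ∀ x, g x = ∑ j, (lam j * c j) * u j x := by
    have h1 : (1 - nadj w) *ᵥ h = ∑ j, c j • ((1 - nadj w) *ᵥ u j) := by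
      rw [hsumfun]
      calc (1 - nadj w) *ᵥ (∑ j, c j • u j)
          = Matrix.mulVecLin (1 - nadj w) (∑ j, c j • u j) := rfl
        _ = ∑ j, Matrix.mulVecLin (1 - nadj w) (c j • u j) := map_sum _ _ _
        _ = ∑ j, c j • ((1 - nadj w) *ᵥ u j) := by
            refine Finset.sum_congr rfl fun j _ => ?_
            rw [LinearMap.map_smul]
            rfl
    intro x
    rw [hg, h1]
    simp only [heig, Finset.sum_apply, Pi.smul_apply, smul_eq_mul]
    exact Finset.sum_congr rfl fun j _ => by ring
  have hgsum : (∑ x, g x ^ 2) = ∑ j, (lam j * c j) ^ 2 := by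
    calc (∑ x, g x ^ 2) = ∑ x, (∑ j ∈ Finset.univ, (lam j * c j) * u j x) ^ 2 :=
          Finset.sum_congr rfl fun x _ => by rw [hgspec x]
      _ = ∑ j, (lam j * c j) ^ 2 := sumsq_ortho u horth Finset.univ _
  -- pointwise formula for g
  have hgx : ∀ x, g x =
      ((if x ∈ A then deg w x else 0) - ∑ x' ∈ A, w x x') / Real.sqrt (deg w x) := by
    intro x
    have hdx := hdeg x
    have hsx : Real.sqrt (deg w x) ≠ 0 := ne_of_gt (Real.sqrt_pos.mpr hdx)
    have hAdj : (nadj w *ᵥ h) x = (∑ x' ∈ A, w x x') / Real.sqrt (deg w x) := by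
      simp only [Matrix.mulVec, dotProduct, nadj, Matrix.of_apply, hh, hvec,
        mul_ite, mul_zero]
      rw [Finset.sum_ite_mem, Finset.univ_inter, Finset.sum_div]
      refine Finset.sum_congr rfl fun x' hx' => ?_
      have hdx' := hdeg x'
      have hsx' : Real.sqrt (deg w x') ≠ 0 := ne_of_gt (Real.sqrt_pos.mpr hdx')
      rw [Real.sqrt_mul hdx.le]
      field_simp
    rw [hg, Matrix.sub_mulVec, Matrix.one_mulVec]
    simp only [Pi.sub_apply, hAdj, sub_div]
    congr 1
    by_cases hx : x ∈ A <;> simp [hh, hvec, hx, Real.div_sqrt]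
  -- combinatorial bound
  have hbound : ∀ x, g x ^ 2 ≤
      α * (if x ∈ A then ∑ x' ∈ Aᶜ, w x x' else ∑ x' ∈ A, w x x') := by
    intro x
    have hdx := hdeg x
    have hsq : Real.sqrt (deg w x) ^ 2 = deg w x := Real.sq_sqrt hdx.le
    rw [hgx x, div_pow, hsq]
    by_cases hx : x ∈ A
    · have hdec : deg w x - ∑ x' ∈ A, w x x' = ∑ x' ∈ Aᶜ, w x x' := by
        have := Finset.sum_add_sum_compl A (fun x' => w x x')
        rw [deg]
        linarith
      have he0 : 0 ≤ ∑ x' ∈ Aᶜ, w x x' := Finset.sum_nonneg fun x' _ => hnonneg x x'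
      have he1 : (∑ x' ∈ Aᶜ, w x x') ≤ α * deg w x := hexp i x hx
      rw [if_pos hx, if_pos hx, hdec, div_le_iff₀ hdx]
      calc (∑ x' ∈ Aᶜ, w x x') ^ 2 = (∑ x' ∈ Aᶜ, w x x') * (∑ x' ∈ Aᶜ, w x x') := sq _
        _ ≤ (∑ x' ∈ Aᶜ, w x x') * (α * deg w x) := by
            exact mul_le_mul_of_nonneg_left he1 he0
        _ = α * (∑ x' ∈ Aᶜ, w x x') * deg w x := by ring
    · obtain ⟨j, hxj, huniq⟩ := hpart x
      have hji : j ≠ i := by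
        intro hji
        exact hx (by rw [hA, ← hji]; exact hxj)
      have hsub : A ⊆ (C j)ᶜ := by
        intro y hy
        rw [Finset.mem_compl]
        intro hyj
        obtain ⟨jy, hjy, huy⟩ := hpart y
        exact hji ((huy j hyj).trans (huy i hy).symm)
      have hf0 : 0 ≤ ∑ x' ∈ A, w x x' := Finset.sum_nonneg fun x' _ => hnonneg x x'
      have hf1 : (∑ x' ∈ A, w x x') ≤ α * deg w x := by
        calc (∑ x' ∈ A, w x x') ≤ ∑ x' ∈ (C j)ᶜ, w x x' :=
              Finset.sum_le_sum_of_subset_of_nonneg hsub (fun x' _ _ => hnonneg x x')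
          _ ≤ α * deg w x := hexp j x hxj
      rw [if_neg hx, if_neg hx, zero_sub, neg_sq, div_le_iff₀ hdx]
      calc (∑ x' ∈ A, w x x') ^ 2 = (∑ x' ∈ A, w x x') * (∑ x' ∈ A, w x x') := sq _
        _ ≤ (∑ x' ∈ A, w x x') * (α * deg w x) := mul_le_mul_of_nonneg_left hf1 hf0
        _ = α * (∑ x' ∈ A, w x x') * deg w x := by ring
  -- sum the bound
  have hEdge : (∑ x ∈ Aᶜ, ∑ x' ∈ A, w x x') = ∑ x ∈ A, ∑ x' ∈ Aᶜ, w x x' := by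
    rw [Finset.sum_comm]
    exact Finset.sum_congr rfl fun x _ => Finset.sum_congr rfl fun x' _ => hsymm x' x
  have hnorm : (∑ x, h x ^ 2) = ∑ x ∈ A, deg w x := by
    rw [← Finset.sum_filter_add_sum_filter_not Finset.univ (fun x => x ∈ A)
      (fun x => h x ^ 2)]
    have h1 : ∀ x ∈ Finset.univ.filter (fun x => x ∈ A), h x ^ 2 = deg w x := by
      intro x hx
      simp only [Finset.mem_filter] at hx
      simp [hh, hvec, hx.2, Real.sq_sqrt (hdeg x).le]
    have h2 : ∀ x ∈ Finset.univ.filter (fun x => ¬ x ∈ A), h x ^ 2 = 0 := by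
      intro x hx
      simp only [Finset.mem_filter] at hx
      simp [hh, hvec, hx.2]
    rw [Finset.sum_congr rfl h1, Finset.sum_congr rfl h2]
    simp [Finset.filter_mem_eq_inter]
  have hgtot : (∑ x, g x ^ 2) ≤ 2 * α ^ 2 * ∑ x, h x ^ 2 := by
    calc (∑ x, g x ^ 2)
        ≤ ∑ x, α * (if x ∈ A then ∑ x' ∈ Aᶜ, w x x' else ∑ x' ∈ A, w x x') :=
          Finset.sum_le_sum fun x _ => hbound x
      _ = α * ((∑ x ∈ A, ∑ x' ∈ Aᶜ, w x x') + ∑ x ∈ Aᶜ, ∑ x' ∈ A, w x x') := by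
          rw [← Finset.mul_sum]
          congr 1
          rw [← Finset.sum_filter_add_sum_filter_not Finset.univ (fun x => x ∈ A)]
          congr 1
          · rw [Finset.filter_mem_eq_inter, Finset.univ_inter]
            exact Finset.sum_congr rfl fun x hx => by rw [if_pos hx]
          · rw [show Finset.univ.filter (fun x => ¬ x ∈ A) = Aᶜ by
              ext x; simp [Finset.mem_compl]]
            exact Finset.sum_congr rfl fun x hx => by
              rw [if_neg (Finset.mem_compl.mp hx)]
      _ = 2 * α * ∑ x ∈ A, ∑ x' ∈ Aᶜ, w x x' := by rw [hEdge]; ring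
      _ ≤ 2 * α * ∑ x ∈ A, α * deg w x := by
          refine mul_le_mul_of_nonneg_left ?_ (by linarith)
          exact Finset.sum_le_sum fun x hx => hexp i x hx
      _ = 2 * α ^ 2 * ∑ x ∈ A, deg w x := by
          rw [Finset.mul_sum, Finset.mul_sum]
          exact Finset.sum_congr rfl fun x _ => by ring
      _ = 2 * α ^ 2 * ∑ x, h x ^ 2 := by rw [hnorm]
  -- spectral lower bound
  have hlow : lamK ^ 2 * ∑ j ∈ T, c j ^ 2 ≤ ∑ x, g x ^ 2 := by
    rw [hgsum, Finset.mul_sum]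
    calc (∑ j ∈ T, lamK ^ 2 * c j ^ 2) ≤ ∑ j ∈ T, (lam j * c j) ^ 2 := by
          refine Finset.sum_le_sum fun j hj => ?_
          have hjk : (⟨k, hk⟩ : Fin N) ≤ j := by
            simp only [hT, Finset.mem_filter] at hj
            exact Fin.mk_le_of_le_val (Nat.le_of_not_lt hj.2)
          have h1 : lamK ≤ lam j := hmono hjk
          have h2 : lamK ^ 2 ≤ lam j ^ 2 := by nlinarith [hlamk]
          calc lamK ^ 2 * c j ^ 2 ≤ lam j ^ 2 * c j ^ 2 :=
                mul_le_mul_of_nonneg_right h2 (sq_nonneg _)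
            _ = (lam j * c j) ^ 2 := by ring
      _ ≤ ∑ j, (lam j * c j) ^ 2 :=
          Finset.sum_le_sum_of_subset_of_nonneg (Finset.subset_univ T)
            (fun j _ _ => sq_nonneg _)
  -- conclude
  rw [hdiffsum]
  rw [div_mul_eq_mul_div, le_div_iff₀ (by positivity : (0:ℝ) < lamK ^ 2)]
  calc (∑ j ∈ T, c j ^ 2) * lamK ^ 2 = lamK ^ 2 * ∑ j ∈ T, c j ^ 2 := by ring
    _ ≤ ∑ x, g x ^ 2 := hlow
    _ ≤ 2 * α ^ 2 * ∑ x, h x ^ 2 := hgtot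
end

section
/- Let U ⊆ X be a nonempty subset such that ŵ(x) := ∑_{x'∈U} w(x,x') > 0 for every x ∈ U, and suppose there is γ > 0 such that every A ⊆ U with w(A) ≤ w(U)/2 satisfies w(A, U∖A) ≥ γ·w(A). Let Ā_U ∈ ℝ^{U×U} be the matrix with entries (Ā_U)_{x,x'} := w(x,x')/√(ŵ(x)·ŵ(x')) and let L_U := I_{|U|} − Ā_U be the Laplacian of the restricted graph on U. Then the second smallest eigenvalue λ_U of L_U satisfies λ_U ≥ γ²/2. -/
open Finset Matrix


lemma coarea_aux {X : Type*} [Fintype X] [DecidableEq X]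
    (w : X → X → ℝ) (U P : Finset X) (γ : ℝ)
    (hsymm : ∀ x x', w x x' = w x' x)
    (hnn : ∀ x x', 0 ≤ w x x')
    (hcut : ∀ A ⊆ P, A.Nonempty →
      γ * ∑ x ∈ A, (∑ y ∈ U, w x y) ≤ ∑ x ∈ A, ∑ y ∈ U \ A, w x y) :
    ∀ (F : X → ℝ), (∀ x, 0 ≤ F x) → (∀ x ∈ U, 0 < F x → x ∈ P) →
      2 * γ * ∑ x ∈ U, (∑ y ∈ U, w x y) * F x ≤
        ∑ x ∈ U, ∑ y ∈ U, w x y * |F x - F y| := by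
  classical
  intro F hF0 hFP
  generalize hn : (U.filter fun x => 0 < F x).card = n
  induction n using Nat.strong_induction_on generalizing F with
  | _ n ih =>
  set S := U.filter fun x => 0 < F x with hS
  rcases S.eq_empty_or_nonempty with hSe | hSne
  · -- F = 0 on U
    have hFz : ∀ x ∈ U, F x = 0 := by
      intro x hx
      by_contra h
      have : x ∈ S := by
        rw [hS, mem_filter]
        exact ⟨hx, lt_of_le_of_ne (hF0 x) (Ne.symm h)⟩
      simp [hSe] at this
    have h1 : ∑ x ∈ U, (∑ y ∈ U, w x y) * F x = 0 := by
      apply Finset.sum_eq_zero; intro x hx; rw [hFz x hx, mul_zero]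
    rw [h1, mul_zero]
    apply Finset.sum_nonneg; intro x _
    apply Finset.sum_nonneg; intro y _
    exact mul_nonneg (hnn x y) (abs_nonneg _)
  · -- inductive step
    have hSsubU : S ⊆ U := filter_subset _ _
    have hSP : S ⊆ P := by
      intro x hx; rw [hS, mem_filter] at hx; exact hFP x hx.1 hx.2
    obtain ⟨x₀, hx₀S, hx₀min⟩ := S.exists_min_image F hSne
    set m := F x₀ with hm
    have hmpos : 0 < m := by
      have := hx₀S; rw [hS, mem_filter] at this; exact this.2
    set F' : X → ℝ := fun x => if x ∈ S then F x - m else 0 with hF'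
    have hF'0 : ∀ x, 0 ≤ F' x := by
      intro x; rw [hF']; dsimp only
      by_cases h : x ∈ S
      · simp only [h, if_true]; linarith [hx₀min x h]
      · simp [h]
    have hFz : ∀ x ∈ U, x ∉ S → F x = 0 := by
      intro x hx hxS
      by_contra h
      exact hxS (by rw [hS, mem_filter]; exact ⟨hx, lt_of_le_of_ne (hF0 x) (Ne.symm h)⟩)
    -- pointwise decomposition of |F x - F y|
    have hpt : ∀ x ∈ U, ∀ y ∈ U, |F x - F y| =
        |F' x - F' y| + m * |(if x ∈ S then (1:ℝ) else 0) - (if y ∈ S then 1 else 0)| := by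
      intro x hx y hy
      by_cases hxS : x ∈ S <;> by_cases hyS : y ∈ S <;>
        simp only [hF', hxS, hyS, if_true, if_false]
      · rw [sub_self, abs_zero, mul_zero, add_zero]
        congr 1; ring
      · rw [hFz y hy hyS, sub_zero, sub_zero, sub_zero, abs_of_nonneg (hF0 x),
          abs_of_nonneg (by linarith [hx₀min x hxS] : (0:ℝ) ≤ F x - m), abs_one]
        ring
      · rw [hFz x hx hxS, zero_sub, zero_sub, zero_sub, abs_neg, abs_neg, abs_neg,
          abs_of_nonneg (hF0 y),
          abs_of_nonneg (by linarith [hx₀min y hyS] : (0:ℝ) ≤ F y - m), abs_one]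
        ring
      · rw [hFz x hx hxS, hFz y hy hyS]; simp
    -- split the total variation
    have hsum1 : ∑ x ∈ U, ∑ y ∈ U, w x y * |F x - F y|
        = ∑ x ∈ U, ∑ y ∈ U, w x y * |F' x - F' y|
          + m * ∑ x ∈ U, ∑ y ∈ U,
              w x y * |(if x ∈ S then (1:ℝ) else 0) - (if y ∈ S then 1 else 0)| := by
      rw [mul_sum, ← sum_add_distrib]
      apply sum_congr rfl; intro x hx
      rw [mul_sum, ← sum_add_distrib]
      apply sum_congr rfl; intro y hy
      rw [hpt x hx y hy]; ring
    -- the indicator double sum is twice the cut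
    have hind : ∑ x ∈ U, ∑ y ∈ U,
          w x y * |(if x ∈ S then (1:ℝ) else 0) - (if y ∈ S then 1 else 0)|
        = 2 * ∑ x ∈ S, ∑ y ∈ U \ S, w x y := by
      have h1 : ∀ x ∈ S, ∑ y ∈ U,
          w x y * |(if x ∈ S then (1:ℝ) else 0) - (if y ∈ S then 1 else 0)|
          = ∑ y ∈ U \ S, w x y := by
        intro x hxS
        rw [← Finset.sum_sdiff hSsubU]
        have e1 : ∑ y ∈ S,
            w x y * |(if x ∈ S then (1:ℝ) else 0) - (if y ∈ S then 1 else 0)| = 0 :=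
          Finset.sum_eq_zero (fun y hyS => by simp [hxS, hyS])
        have e2 : ∑ y ∈ U \ S,
            w x y * |(if x ∈ S then (1:ℝ) else 0) - (if y ∈ S then 1 else 0)|
            = ∑ y ∈ U \ S, w x y :=
          Finset.sum_congr rfl (fun y hy => by simp [hxS, (mem_sdiff.mp hy).2])
        rw [e1, e2, add_zero]
      have h2 : ∀ x ∈ U \ S, ∑ y ∈ U,
          w x y * |(if x ∈ S then (1:ℝ) else 0) - (if y ∈ S then 1 else 0)|
          = ∑ y ∈ S, w x y := by
        intro x hx
        have hxS : x ∉ S := (mem_sdiff.mp hx).2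
        rw [← Finset.sum_sdiff hSsubU]
        have e1 : ∑ y ∈ S,
            w x y * |(if x ∈ S then (1:ℝ) else 0) - (if y ∈ S then 1 else 0)|
            = ∑ y ∈ S, w x y :=
          Finset.sum_congr rfl (fun y hyS => by simp [hxS, hyS])
        have e2 : ∑ y ∈ U \ S,
            w x y * |(if x ∈ S then (1:ℝ) else 0) - (if y ∈ S then 1 else 0)| = 0 :=
          Finset.sum_eq_zero (fun y hy => by simp [hxS, (mem_sdiff.mp hy).2])
        rw [e1, e2, zero_add]
      rw [← Finset.sum_sdiff hSsubU, Finset.sum_congr rfl h2, Finset.sum_congr rfl h1]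
      have : ∑ x ∈ U \ S, ∑ y ∈ S, w x y = ∑ x ∈ S, ∑ y ∈ U \ S, w x y := by
        rw [Finset.sum_comm]
        exact Finset.sum_congr rfl fun x _ => Finset.sum_congr rfl fun y _ => hsymm y x
      rw [this]; ring
    -- split the degree sum
    have hsum2 : ∑ x ∈ U, (∑ y ∈ U, w x y) * F x
        = ∑ x ∈ U, (∑ y ∈ U, w x y) * F' x + m * ∑ x ∈ S, (∑ y ∈ U, w x y) := by
      rw [← Finset.sum_sdiff hSsubU,
        ← Finset.sum_sdiff hSsubU (f := fun x => (∑ y ∈ U, w x y) * F' x)]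
      have e1 : ∑ x ∈ U \ S, (∑ y ∈ U, w x y) * F x
          = ∑ x ∈ U \ S, (∑ y ∈ U, w x y) * F' x := by
        apply sum_congr rfl; intro x hx
        obtain ⟨hxU, hxS⟩ := mem_sdiff.mp hx
        rw [hFz x hxU hxS, hF']; simp [hxS]
      have e2 : ∑ x ∈ S, (∑ y ∈ U, w x y) * F x
          = ∑ x ∈ S, ((∑ y ∈ U, w x y) * F' x + m * (∑ y ∈ U, w x y)) := by
        apply sum_congr rfl; intro x hxS
        rw [hF']; simp only [hxS, if_true]; ring
      rw [e1, e2, sum_add_distrib, ← mul_sum]; ring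
    -- apply the induction hypothesis to F'
    have hS'lt : (U.filter fun x => 0 < F' x).card < n := by
      rw [← hn]
      apply Finset.card_lt_card
      rw [Finset.ssubset_iff_of_subset]
      · exact ⟨x₀, hx₀S, by
          intro h
          rw [mem_filter, hF'] at h
          simp only [hx₀S, if_true] at h
          linarith [h.2]⟩
      · intro x hx
        rw [mem_filter] at hx
        by_contra hxS
        rw [hF'] at hx
        simp only [hxS, if_false] at hx
        exact absurd hx.2 (lt_irrefl 0)
    have hF'P : ∀ x ∈ U, 0 < F' x → x ∈ P := by
      intro x hx h
      apply hSP
      by_contra hxS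
      rw [hF'] at h; simp only [hxS, if_false] at h
      exact absurd h (lt_irrefl 0)
    have ihF' := ih _ hS'lt F' hF'0 hF'P rfl
    have hc := hcut S hSP hSne
    have hc' : m * (γ * ∑ x ∈ S, (∑ y ∈ U, w x y)) ≤ m * ∑ x ∈ S, ∑ y ∈ U \ S, w x y :=
      mul_le_mul_of_nonneg_left hc hmpos.le
    rw [hsum1, hsum2, hind]
    nlinarith [ihF', hc']

lemma main_aux {X : Type*} [Fintype X] [DecidableEq X]
    (w : X → X → ℝ) (U : Finset X) (μ γ : ℝ) (hγ : 0 < γ)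
    (hsymm : ∀ x x', w x x' = w x' x)
    (hnn : ∀ x x', 0 ≤ w x x')
    (g : X → ℝ)
    (hE : ∀ x ∈ U, ∑ y ∈ U, w x y * g y = (1 - μ) * ((∑ y ∈ U, w x y) * g x))
    (hPne : ∃ x ∈ U, 0 < g x)
    (hdpos : ∀ x ∈ U, 0 < ∑ y ∈ U, w x y)
    (hcut : ∀ A ⊆ U, (∀ x ∈ A, 0 < g x) → A.Nonempty →
      γ * ∑ x ∈ A, (∑ y ∈ U, w x y) ≤ ∑ x ∈ A, ∑ y ∈ U \ A, w x y) :
    γ ^ 2 / 2 ≤ μ := by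
  classical
  set h : X → ℝ := fun x => max (g x) 0 with hh
  have hh0 : ∀ x, 0 ≤ h x := fun x => le_max_right _ _
  have hgh : ∀ x, g x ≤ h x := fun x => le_max_left _ _
  have hhg : ∀ x, h x * g x = h x ^ 2 := by
    intro x
    rcases le_or_gt (g x) 0 with hc | hc
    · rw [hh]; simp only [max_eq_right hc]; ring
    · rw [hh]; simp only [max_eq_left hc.le]; ring
  have hhpos : ∀ x, 0 < h x → 0 < g x := by
    intro x hx
    by_contra hc
    push_neg at hc
    rw [hh] at hx; simp only [max_eq_right hc] at hx; exact absurd hx (lt_irrefl 0)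
  set T := ∑ x ∈ U, (∑ y ∈ U, w x y) * h x ^ 2 with hT
  have hTpos : 0 < T := by
    obtain ⟨x, hxU, hxg⟩ := hPne
    apply Finset.sum_pos' (fun y hy => mul_nonneg (Finset.sum_nonneg fun z _ => hnn y z) (sq_nonneg _))
    refine ⟨x, hxU, mul_pos (hdpos x hxU) ?_⟩
    have : 0 < h x := lt_of_lt_of_le hxg (hgh x)
    positivity
  -- identity: double sums of w·h², both orders
  have e1 : ∑ x ∈ U, ∑ y ∈ U, w x y * h x ^ 2 = T := by
    apply Finset.sum_congr rfl; intro x _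
    rw [← Finset.sum_mul]
  have e2 : ∑ x ∈ U, ∑ y ∈ U, w x y * h y ^ 2 = T := by
    rw [Finset.sum_comm]
    apply Finset.sum_congr rfl; intro y _
    rw [← Finset.sum_mul]
    congr 1
    exact Finset.sum_congr rfl fun x _ => hsymm x y
  set B := ∑ x ∈ U, ∑ y ∈ U, w x y * (h x * h y) with hB
  -- step 1 : Rayleigh bound
  have step1 : (1 - μ) * T ≤ B := by
    have lhs : ∑ x ∈ U, h x * ∑ y ∈ U, w x y * g y = (1 - μ) * T := by
      rw [hT, Finset.mul_sum]
      apply Finset.sum_congr rfl; intro x hx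
      rw [hE x hx]
      rw [← hhg x]; ring
    have lhs2 : ∑ x ∈ U, h x * ∑ y ∈ U, w x y * g y ≤ B := by
      rw [hB]
      apply Finset.sum_le_sum; intro x _
      rw [Finset.mul_sum]
      apply Finset.sum_le_sum; intro y _
      have : w x y * g y * h x ≤ w x y * h y * h x := by
        apply mul_le_mul_of_nonneg_right _ (hh0 x)
        exact mul_le_mul_of_nonneg_left (hgh y) (hnn x y)
      calc h x * (w x y * g y) = w x y * g y * h x := by ring
        _ ≤ w x y * h y * h x := this
        _ = w x y * (h x * h y) := by ring
    linarith
  set Q2 := ∑ x ∈ U, ∑ y ∈ U, w x y * (h x - h y) ^ 2 with hQ2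
  have hQ2e : Q2 = 2 * T - 2 * B := by
    rw [hQ2]
    have : ∀ x ∈ U, ∑ y ∈ U, w x y * (h x - h y) ^ 2
        = ∑ y ∈ U, w x y * h x ^ 2 + ∑ y ∈ U, w x y * h y ^ 2
          - 2 * ∑ y ∈ U, w x y * (h x * h y) := by
      intro x _
      rw [Finset.mul_sum, ← Finset.sum_add_distrib, ← Finset.sum_sub_distrib]
      apply Finset.sum_congr rfl; intro y _; ring
    rw [Finset.sum_congr rfl this, Finset.sum_sub_distrib, Finset.sum_add_distrib,
      e1, e2, ← Finset.mul_sum, ← hB]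
    ring
  have hQ2le : Q2 ≤ 2 * μ * T := by rw [hQ2e]; linarith
  have hQ20 : 0 ≤ Q2 := Finset.sum_nonneg fun x _ => Finset.sum_nonneg fun y _ =>
    mul_nonneg (hnn x y) (sq_nonneg _)
  -- step 2 : coarea applied to F = h²
  set P := U.filter (fun x => 0 < g x) with hP
  have hcut' : ∀ A ⊆ P, A.Nonempty →
      γ * ∑ x ∈ A, (∑ y ∈ U, w x y) ≤ ∑ x ∈ A, ∑ y ∈ U \ A, w x y := by
    intro A hAP hAne
    exact hcut A (hAP.trans (filter_subset _ _))
      (fun x hxA => (mem_filter.mp (hAP hxA)).2) hAne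
  have step2 := coarea_aux w U P γ hsymm hnn hcut' (fun x => h x ^ 2)
    (fun x => sq_nonneg _)
    (by
      intro x hxU hx
      rw [hP, mem_filter]
      refine ⟨hxU, hhpos x ?_⟩
      by_contra hc
      push_neg at hc
      have : h x = 0 := le_antisymm hc (hh0 x)
      simp [this] at hx)
  set V := ∑ x ∈ U, ∑ y ∈ U, w x y * |h x ^ 2 - h y ^ 2| with hV
  have hVge : 2 * γ * T ≤ V := step2
  -- step 3 : Cauchy-Schwarz
  set R := ∑ x ∈ U, ∑ y ∈ U, w x y * (h x + h y) ^ 2 with hR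
  have hR0 : 0 ≤ R := Finset.sum_nonneg fun x _ => Finset.sum_nonneg fun y _ =>
    mul_nonneg (hnn x y) (sq_nonneg _)
  have hRle : R ≤ 4 * T := by
    have : R ≤ ∑ x ∈ U, ∑ y ∈ U, (2 * (w x y * h x ^ 2) + 2 * (w x y * h y ^ 2)) := by
      apply Finset.sum_le_sum; intro x _
      apply Finset.sum_le_sum; intro y _
      nlinarith [hnn x y, sq_nonneg (h x - h y), sq_nonneg (h x + h y)]
    calc R ≤ _ := this
      _ = 4 * T := by
          rw [Finset.sum_congr rfl (fun x (_ : x ∈ U) => Finset.sum_add_distrib),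
            Finset.sum_add_distrib]
          rw [Finset.sum_congr rfl (fun x (_ : x ∈ U) => (Finset.mul_sum _ _ _).symm),
            ← Finset.mul_sum, e1]
          rw [Finset.sum_congr rfl (fun x (_ : x ∈ U) => (Finset.mul_sum _ _ _).symm),
            ← Finset.mul_sum, e2]
          ring
  have hCS : V ^ 2 ≤ Q2 * R := by
    have key : (∑ p ∈ U ×ˢ U, w p.1 p.2 * |h p.1 ^ 2 - h p.2 ^ 2|) ^ 2
        ≤ (∑ p ∈ U ×ˢ U, w p.1 p.2 * (h p.1 - h p.2) ^ 2)
          * ∑ p ∈ U ×ˢ U, w p.1 p.2 * (h p.1 + h p.2) ^ 2 := by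
      apply Finset.sum_sq_le_sum_mul_sum_of_sq_eq_mul
      · exact fun p _ => mul_nonneg (hnn _ _) (sq_nonneg _)
      · exact fun p _ => mul_nonneg (hnn _ _) (sq_nonneg _)
      · intro p _
        rw [mul_pow, sq_abs]
        ring
    rwa [Finset.sum_product, Finset.sum_product, Finset.sum_product,
      ← hV, ← hQ2, ← hR] at key
  -- conclude
  have hμ0 : 0 ≤ μ := by nlinarith
  have h1 : (2 * γ * T) ^ 2 ≤ V ^ 2 := by
    apply pow_le_pow_left₀ (by positivity) hVge
  have h2 : Q2 * R ≤ (2 * μ * T) * (4 * T) :=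
    mul_le_mul hQ2le hRle hR0 (by positivity)
  nlinarith [mul_pos hTpos hTpos]


lemma quad_aux {X : Type*} [Fintype X] [DecidableEq X]
    (w : X → X → ℝ) (U : Finset X) (μ : ℝ)
    (hsymm : ∀ x x', w x x' = w x' x)
    (g : X → ℝ)
    (hE : ∀ x ∈ U, ∑ y ∈ U, w x y * g y = (1 - μ) * ((∑ y ∈ U, w x y) * g x))
    (hnorm : ∑ x ∈ U, (∑ y ∈ U, w x y) * g x ^ 2 = 1) :
    ∑ x ∈ U, ∑ y ∈ U, w x y * (g x - g y) ^ 2 = 2 * μ := by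
  have e1 : ∑ x ∈ U, ∑ y ∈ U, w x y * g x ^ 2 = 1 := by
    rw [← hnorm]
    apply Finset.sum_congr rfl; intro x _
    rw [← Finset.sum_mul]
  have e2 : ∑ x ∈ U, ∑ y ∈ U, w x y * g y ^ 2 = 1 := by
    rw [Finset.sum_comm, ← e1]
    apply Finset.sum_congr rfl; intro y _
    apply Finset.sum_congr rfl; intro x _
    rw [hsymm]
  have eB : ∑ x ∈ U, ∑ y ∈ U, w x y * (g x * g y) = 1 - μ := by
    have : ∑ x ∈ U, g x * ∑ y ∈ U, w x y * g y
        = (1 - μ) * ∑ x ∈ U, (∑ y ∈ U, w x y) * g x ^ 2 := by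
      rw [Finset.mul_sum]
      apply Finset.sum_congr rfl; intro x hx
      rw [hE x hx]; ring
    rw [hnorm, mul_one] at this
    rw [← this]
    apply Finset.sum_congr rfl; intro x _
    rw [Finset.mul_sum]
    apply Finset.sum_congr rfl; intro y _; ring
  have expand : ∀ x ∈ U, ∑ y ∈ U, w x y * (g x - g y) ^ 2
      = ∑ y ∈ U, w x y * g x ^ 2 + ∑ y ∈ U, w x y * g y ^ 2
        - 2 * ∑ y ∈ U, w x y * (g x * g y) := by
    intro x _
    rw [Finset.mul_sum, ← Finset.sum_add_distrib, ← Finset.sum_sub_distrib]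
    apply Finset.sum_congr rfl; intro y _; ring
  rw [Finset.sum_congr rfl expand, Finset.sum_sub_distrib, Finset.sum_add_distrib,
    e1, e2, ← Finset.mul_sum, eB]
  ring

lemma cutpos_aux {X : Type*} [Fintype X] [DecidableEq X]
    (w : X → X → ℝ) (U : Finset X) (γ : ℝ) (hγ : 0 < γ)
    (hsymm : ∀ x x', w x x' = w x' x)
    (hnn : ∀ x x', 0 ≤ w x x')
    (hwhat : ∀ x ∈ U, 0 < ∑ x' ∈ U, w x x')
    (hcheeger : ∀ A ⊆ U,
        (∑ x ∈ A, ∑ x', w x x') ≤ (∑ x ∈ U, ∑ x', w x x') / 2 →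
        γ * (∑ x ∈ A, ∑ x', w x x') ≤ ∑ x ∈ A, ∑ x' ∈ U \ A, w x x')
    (A : Finset X) (hAU : A ⊆ U) (hA : A.Nonempty) (hA' : (U \ A).Nonempty) :
    0 < ∑ x ∈ A, ∑ y ∈ U \ A, w x y := by
  classical
  have hWpos : ∀ B ⊆ U, B.Nonempty → 0 < ∑ x ∈ B, ∑ x', w x x' := by
    intro B hBU hB
    obtain ⟨b, hb⟩ := hB
    apply Finset.sum_pos' (fun x _ => Finset.sum_nonneg fun y _ => hnn x y)
    refine ⟨b, hb, lt_of_lt_of_le (hwhat b (hBU hb)) ?_⟩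
    exact Finset.sum_le_sum_of_subset_of_nonneg (Finset.subset_univ U)
      (fun y _ _ => hnn b y)
  have hsplit : ∑ x ∈ U \ A, ∑ x', w x x' + ∑ x ∈ A, ∑ x', w x x'
      = ∑ x ∈ U, ∑ x', w x x' := Finset.sum_sdiff hAU
  rcases le_or_gt (∑ x ∈ A, ∑ x', w x x') ((∑ x ∈ U, ∑ x', w x x') / 2) with hc | hc
  · have := hcheeger A hAU hc
    have hpos := hWpos A hAU hA
    nlinarith
  · have hc2 : ∑ x ∈ U \ A, ∑ x', w x x' ≤ (∑ x ∈ U, ∑ x', w x x') / 2 := by linarith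
    have h1 := hcheeger (U \ A) (Finset.sdiff_subset) hc2
    have hpos := hWpos (U \ A) Finset.sdiff_subset hA'
    have hUA : U \ (U \ A) = A := Finset.sdiff_sdiff_eq_self hAU
    rw [hUA] at h1
    have hswap : ∑ x ∈ U \ A, ∑ y ∈ A, w x y = ∑ x ∈ A, ∑ y ∈ U \ A, w x y := by
      rw [Finset.sum_comm]
      exact Finset.sum_congr rfl fun x _ => Finset.sum_congr rfl fun y _ => hsymm y x
    rw [hswap] at h1
    nlinarith

lemma const_aux {X : Type*} [Fintype X] [DecidableEq X]
    (w : X → X → ℝ) (U : Finset X) (γ : ℝ) (hγ : 0 < γ)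
    (hsymm : ∀ x x', w x x' = w x' x)
    (hnn : ∀ x x', 0 ≤ w x x')
    (hwhat : ∀ x ∈ U, 0 < ∑ x' ∈ U, w x x')
    (hcheeger : ∀ A ⊆ U,
        (∑ x ∈ A, ∑ x', w x x') ≤ (∑ x ∈ U, ∑ x', w x x') / 2 →
        γ * (∑ x ∈ A, ∑ x', w x x') ≤ ∑ x ∈ A, ∑ x' ∈ U \ A, w x x')
    (g : X → ℝ)
    (hzero : ∀ x ∈ U, ∀ y ∈ U, w x y * (g x - g y) ^ 2 = 0) :
    ∀ x ∈ U, ∀ y ∈ U, g x = g y := by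
  classical
  intro x hx y hy
  by_contra hne
  set A := U.filter (fun z => g z = g x) with hA
  have hAU : A ⊆ U := filter_subset _ _
  have hxA : x ∈ A := by rw [hA, mem_filter]; exact ⟨hx, rfl⟩
  have hyA : y ∈ U \ A := by
    rw [mem_sdiff, hA, mem_filter]
    exact ⟨hy, fun h => hne (h.2.symm)⟩
  have hpos := cutpos_aux w U γ hγ hsymm hnn hwhat hcheeger A hAU ⟨x, hxA⟩ ⟨y, hyA⟩
  have hzero' : ∑ a ∈ A, ∑ b ∈ U \ A, w a b = 0 := by
    apply Finset.sum_eq_zero; intro a ha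
    apply Finset.sum_eq_zero; intro b hb
    rw [hA, mem_filter] at ha
    obtain ⟨haU, hag⟩ := ha
    obtain ⟨hbU, hbA⟩ := mem_sdiff.mp hb
    by_contra hwz
    have hwpos : 0 < w a b := lt_of_le_of_ne (hnn a b) (Ne.symm hwz)
    have hz := hzero a haU b hbU
    have h2 : (g a - g b) ^ 2 = 0 := by
      rcases mul_eq_zero.mp hz with h | h
      · exact absurd h hwz
      · exact h
    have hgg : g a = g b := by
      have := sq_eq_zero_iff.mp h2; linarith
    exact hbA (by rw [hA, mem_filter]; exact ⟨hbU, by rw [← hgg, hag]⟩)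
  rw [hzero'] at hpos
  exact absurd hpos (lt_irrefl 0)


lemma eig_aux {X : Type*} [Fintype X] [DecidableEq X]
    (w : X → X → ℝ) (U : Finset X)
    (hwhat : ∀ x ∈ U, 0 < ∑ x' ∈ U, w x x')
    (μ : ℝ) (f : ↥U → ℝ) (g : X → ℝ)
    (hg : ∀ (x : X) (hx : x ∈ U),
      f ⟨x, hx⟩ = Real.sqrt (∑ x' ∈ U, w x x') * g x)
    (hf : ((1 : Matrix ↥U ↥U ℝ) -
            Matrix.of fun x y : ↥U => w x.1 y.1 /
              Real.sqrt ((∑ x' ∈ U, w x.1 x') * (∑ x' ∈ U, w y.1 x'))) *ᵥ f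
          = μ • f) :
    ∀ x ∈ U, ∑ y ∈ U, w x y * g y = (1 - μ) * ((∑ y ∈ U, w x y) * g x) := by
  intro x hx
  have hdx : 0 < ∑ x' ∈ U, w x x' := hwhat x hx
  rw [Matrix.sub_mulVec, Matrix.one_mulVec] at hf
  have h0 := congrFun hf ⟨x, hx⟩
  simp only [Pi.sub_apply, Pi.smul_apply, smul_eq_mul, Matrix.mulVec,
    dotProduct, Matrix.of_apply] at h0
  have hterm : ∀ y : ↥U,
      w x y.1 / Real.sqrt ((∑ x' ∈ U, w x x') * (∑ x' ∈ U, w y.1 x')) * f y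
      = w x y.1 * g y.1 / Real.sqrt (∑ x' ∈ U, w x x') := by
    intro y
    have hdy : 0 < ∑ x' ∈ U, w y.1 x' := hwhat y.1 y.2
    rw [hg y.1 y.2, Real.sqrt_mul hdx.le]
    have h1 : Real.sqrt (∑ x' ∈ U, w y.1 x') ≠ 0 := ne_of_gt (Real.sqrt_pos.mpr hdy)
    have h2 : Real.sqrt (∑ x' ∈ U, w x x') ≠ 0 := ne_of_gt (Real.sqrt_pos.mpr hdx)
    field_simp
  rw [Finset.sum_congr rfl (fun y _ => hterm y), ← Finset.sum_div,
    Finset.sum_coe_sort U (fun y => w x y * g y), hg x hx] at h0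
  have hs : Real.sqrt (∑ x' ∈ U, w x x') ≠ 0 := ne_of_gt (Real.sqrt_pos.mpr hdx)
  have h3 : (∑ y ∈ U, w x y * g y) / Real.sqrt (∑ x' ∈ U, w x x')
      = (1 - μ) * (Real.sqrt (∑ x' ∈ U, w x x') * g x) := by linarith
  rw [div_eq_iff hs] at h3
  rw [h3, show (1 - μ) * (Real.sqrt (∑ x' ∈ U, w x x') * g x) * Real.sqrt (∑ x' ∈ U, w x x')
    = (1 - μ) * (Real.sqrt (∑ x' ∈ U, w x x') * Real.sqrt (∑ x' ∈ U, w x x') * g x) from by ring,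
    Real.mul_self_sqrt hdx.le]

lemma orth_aux {X : Type*} [Fintype X] [DecidableEq X]
    (w : X → X → ℝ) (U : Finset X)
    (hsymm : ∀ x x', w x x' = w x' x)
    (hwhat : ∀ x ∈ U, 0 < ∑ x' ∈ U, w x x')
    (μ : ℝ) (f : ↥U → ℝ)
    (hf : ((1 : Matrix ↥U ↥U ℝ) -
            Matrix.of fun x y : ↥U => w x.1 y.1 /
              Real.sqrt ((∑ x' ∈ U, w x.1 x') * (∑ x' ∈ U, w y.1 x'))) *ᵥ f
          = μ • f)
    (hμ : μ ≠ 0) :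
    ∑ x : ↥U, Real.sqrt (∑ x' ∈ U, w x.1 x') * f x = 0 := by
  classical
  set v : ↥U → ℝ := fun x => Real.sqrt (∑ x' ∈ U, w x.1 x') with hv
  have hpt : ∀ x : ↥U, f x - ∑ y : ↥U, w x.1 y.1 /
      Real.sqrt ((∑ x' ∈ U, w x.1 x') * (∑ x' ∈ U, w y.1 x')) * f y = μ * f x := by
    intro x
    have h0 := congrFun hf x
    rw [Matrix.sub_mulVec, Matrix.one_mulVec] at h0
    simpa only [Pi.sub_apply, Pi.smul_apply, smul_eq_mul, Matrix.mulVec,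
      dotProduct, Matrix.of_apply] using h0
  have hAv : ∀ x : ↥U, ∑ y : ↥U, w x.1 y.1 /
      Real.sqrt ((∑ x' ∈ U, w x.1 x') * (∑ x' ∈ U, w y.1 x')) * v y = v x := by
    intro x
    have hdx : 0 < ∑ x' ∈ U, w x.1 x' := hwhat x.1 x.2
    have hterm : ∀ y : ↥U, w x.1 y.1 /
        Real.sqrt ((∑ x' ∈ U, w x.1 x') * (∑ x' ∈ U, w y.1 x')) * v y
        = w x.1 y.1 / Real.sqrt (∑ x' ∈ U, w x.1 x') := by
      intro y
      have hdy : 0 < ∑ x' ∈ U, w y.1 x' := hwhat y.1 y.2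
      rw [hv]
      dsimp only
      rw [Real.sqrt_mul hdx.le]
      have h1 : Real.sqrt (∑ x' ∈ U, w y.1 x') ≠ 0 := ne_of_gt (Real.sqrt_pos.mpr hdy)
      field_simp
    rw [Finset.sum_congr rfl (fun y _ => hterm y), ← Finset.sum_div,
      Finset.sum_coe_sort U (fun y => w x.1 y), hv]
    exact Real.div_sqrt
  set s := ∑ x : ↥U, v x * f x with hs
  have key : μ * s = 0 := by
    have e1 : μ * s = ∑ x : ↥U, v x * (μ * f x) := by
      rw [hs, Finset.mul_sum]
      apply Finset.sum_congr rfl; intro x _; ring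
    have e2 : ∑ x : ↥U, v x * (μ * f x)
        = s - ∑ x : ↥U, ∑ y : ↥U, v x * (w x.1 y.1 /
            Real.sqrt ((∑ x' ∈ U, w x.1 x') * (∑ x' ∈ U, w y.1 x')) * f y) := by
      rw [hs, ← Finset.sum_sub_distrib]
      apply Finset.sum_congr rfl; intro x _
      rw [← hpt x, ← Finset.mul_sum]
      ring
    have e3 : ∑ x : ↥U, ∑ y : ↥U, v x * (w x.1 y.1 /
          Real.sqrt ((∑ x' ∈ U, w x.1 x') * (∑ x' ∈ U, w y.1 x')) * f y) = s := by
      rw [Finset.sum_comm]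
      rw [hs]
      apply Finset.sum_congr rfl; intro y _
      have : ∀ x : ↥U, v x * (w x.1 y.1 /
          Real.sqrt ((∑ x' ∈ U, w x.1 x') * (∑ x' ∈ U, w y.1 x')) * f y)
          = f y * (w y.1 x.1 /
            Real.sqrt ((∑ x' ∈ U, w y.1 x') * (∑ x' ∈ U, w x.1 x')) * v x) := by
        intro x
        rw [hsymm x.1 y.1, mul_comm (∑ x' ∈ U, w x.1 x') (∑ x' ∈ U, w y.1 x')]
        ring
      rw [Finset.sum_congr rfl (fun x _ => this x), ← Finset.mul_sum, hAv y]
      ring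
    rw [e1, e2, e3, sub_self]
  have hs0 : s = 0 := by
    rcases mul_eq_zero.mp key with h | h
    · exact absurd h hμ
    · exact h
  rw [← hs0, hs]

/-- Cheeger bound: if every `A ⊆ U` with `w(A) ≤ w(U)/2`
satisfies `w(A, U∖A) ≥ γ·w(A)`, then the second smallest eigenvalue of the
Laplacian of the graph restricted to `U` is at least `γ²/2`. -/
theorem stmt11 {X : Type*} [Fintype X] [DecidableEq X] (w : X → X → ℝ)
    (hsymm : ∀ x x', w x x' = w x' x)
    (hnonneg : ∀ x x', 0 ≤ w x x')
    (hsum : ∑ x, ∑ x', w x x' = 1)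
    (U : Finset X) (hUne : U.Nonempty)
    -- the restricted degrees `ŵ(x) = ∑_{x'∈U} w(x,x')` are positive on `U`
    (hwhat : ∀ x ∈ U, 0 < ∑ x' ∈ U, w x x')
    (γ : ℝ) (hγ : 0 < γ)
    -- the conductance (Cheeger) condition on `U`
    (hcheeger : ∀ A ⊆ U,
        (∑ x ∈ A, ∑ x', w x x') ≤ (∑ x ∈ U, ∑ x', w x x') / 2 →
        γ * (∑ x ∈ A, ∑ x', w x x') ≤ ∑ x ∈ A, ∑ x' ∈ U \ A, w x x')
    -- an orthonormal eigenbasis of the Laplacian `L_U = I − Ā_U` of the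
    -- restricted graph, with eigenvalues listed in nondecreasing order
    (lam : Fin U.card → ℝ) (u : Fin U.card → ↥U → ℝ)
    (horth : ∀ j j' : Fin U.card,
        (∑ x : ↥U, u j x * u j' x) = if j = j' then (1 : ℝ) else 0)
    (heig : ∀ j : Fin U.card,
        ((1 : Matrix ↥U ↥U ℝ) -
            Matrix.of fun x y : ↥U => w x.1 y.1 /
              Real.sqrt ((∑ x' ∈ U, w x.1 x') * (∑ x' ∈ U, w y.1 x'))) *ᵥ u j
          = lam j • u j)
    (hmono : Monotone lam) :
    ∀ j : Fin U.card, (j : ℕ) = 1 → γ ^ 2 / 2 ≤ lam j := by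
  classical
  intro j hj
  have hcard : 0 < U.card := Finset.card_pos.mpr hUne
  have hWnn : ∀ x : X, 0 ≤ ∑ x', w x x' := fun x => Finset.sum_nonneg fun y _ => hnonneg x y
  -- construct the diagonally rescaled eigenvectors g_k
  have hgmk : ∀ k : Fin U.card, ∃ gk : X → ℝ,
      ∀ (x : X) (hx : x ∈ U), u k ⟨x, hx⟩ = Real.sqrt (∑ x' ∈ U, w x x') * gk x := by
    intro k
    refine ⟨fun x => if hx : x ∈ U then u k ⟨x, hx⟩ / Real.sqrt (∑ x' ∈ U, w x x') else 0, ?_⟩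
    intro x hx
    dsimp only
    rw [dif_pos hx, mul_comm,
      div_mul_cancel₀ _ (ne_of_gt (Real.sqrt_pos.mpr (hwhat x hx)))]
  -- inner products in terms of the g_k
  have hsum_pair : ∀ (k k' : Fin U.card) (gk gk' : X → ℝ),
      (∀ (x : X) (hx : x ∈ U), u k ⟨x, hx⟩ = Real.sqrt (∑ x' ∈ U, w x x') * gk x) →
      (∀ (x : X) (hx : x ∈ U), u k' ⟨x, hx⟩ = Real.sqrt (∑ x' ∈ U, w x x') * gk' x) →
      ∑ x : ↥U, u k x * u k' x = ∑ x ∈ U, (∑ y ∈ U, w x y) * (gk x * gk' x) := by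
    intro k k' gk gk' hgk hgk'
    rw [← Finset.sum_coe_sort U (fun x => (∑ y ∈ U, w x y) * (gk x * gk' x))]
    apply Finset.sum_congr rfl
    intro x _
    have h2 : u k x = Real.sqrt (∑ x' ∈ U, w x.1 x') * gk x.1 := hgk x.1 x.2
    have h3 : u k' x = Real.sqrt (∑ x' ∈ U, w x.1 x') * gk' x.1 := hgk' x.1 x.2
    rw [h2, h3, show Real.sqrt (∑ x' ∈ U, w x.1 x') * gk x.1 *
        (Real.sqrt (∑ x' ∈ U, w x.1 x') * gk' x.1)
      = Real.sqrt (∑ x' ∈ U, w x.1 x') * Real.sqrt (∑ x' ∈ U, w x.1 x') * (gk x.1 * gk' x.1)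
      from by ring, Real.mul_self_sqrt (hwhat x.1 x.2).le]
  have hnorm_of : ∀ (k : Fin U.card) (gk : X → ℝ),
      (∀ (x : X) (hx : x ∈ U), u k ⟨x, hx⟩ = Real.sqrt (∑ x' ∈ U, w x x') * gk x) →
      ∑ x ∈ U, (∑ y ∈ U, w x y) * gk x ^ 2 = 1 := by
    intro k gk hgk
    have h1 := horth k k
    rw [if_pos rfl] at h1
    rw [← h1, hsum_pair k k gk gk hgk hgk]
    apply Finset.sum_congr rfl; intro x _; ring
  obtain ⟨g, hg⟩ := hgmk j
  have hE := eig_aux w U hwhat (lam j) (u j) g hg (heig j)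
  have hnormg := hnorm_of j g hg
  by_cases hμ : lam j = 0
  · -- impossible: the kernel would be 2-dimensional, contradicting connectivity
    exfalso
    set k0 : Fin U.card := ⟨0, hcard⟩ with hk0
    obtain ⟨g0, hg0⟩ := hgmk k0
    have hE0 := eig_aux w U hwhat (lam k0) (u k0) g0 hg0 (heig k0)
    have hnorm0 := hnorm_of k0 g0 hg0
    have hq0 := quad_aux w U (lam k0) hsymm g0 hE0 hnorm0
    have hqj := quad_aux w U (lam j) hsymm g hE hnormg
    have hlk0 : lam k0 = 0 := by
      have h1 : lam k0 ≤ lam j := hmono (by rw [Fin.le_def]; exact Nat.zero_le _)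
      have h2 : 0 ≤ 2 * lam k0 := by
        rw [← hq0]
        exact Finset.sum_nonneg fun x _ => Finset.sum_nonneg fun y _ =>
          mul_nonneg (hnonneg x y) (sq_nonneg _)
      rw [hμ] at h1; linarith
    have hzero_of : ∀ (G : X → ℝ), ∑ a ∈ U, ∑ b ∈ U, w a b * (G a - G b) ^ 2 = 0 →
        ∀ x ∈ U, ∀ y ∈ U, w x y * (G x - G y) ^ 2 = 0 := by
      intro G hG x hx y hy
      have h1 := (Finset.sum_eq_zero_iff_of_nonneg (fun a _ => Finset.sum_nonneg fun b _ =>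
        mul_nonneg (hnonneg a b) (sq_nonneg _))).mp hG x hx
      exact (Finset.sum_eq_zero_iff_of_nonneg (fun b _ =>
        mul_nonneg (hnonneg x b) (sq_nonneg _))).mp h1 y hy
    have hz0 := hzero_of g0 (by rw [hq0, hlk0]; ring)
    have hzj := hzero_of g (by rw [hqj, hμ]; ring)
    have hc0 := const_aux w U γ hγ hsymm hnonneg hwhat hcheeger g0 hz0
    have hcj := const_aux w U γ hγ hsymm hnonneg hwhat hcheeger g hzj
    obtain ⟨x0, hx0⟩ := hUne
    have hD0 : g0 x0 ^ 2 * (∑ x ∈ U, (∑ y ∈ U, w x y)) = 1 := by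
      rw [← hnorm0, Finset.mul_sum]
      apply Finset.sum_congr rfl; intro x hx
      rw [hc0 x hx x0 hx0]; ring
    have hDj : g x0 ^ 2 * (∑ x ∈ U, (∑ y ∈ U, w x y)) = 1 := by
      rw [← hnormg, Finset.mul_sum]
      apply Finset.sum_congr rfl; intro x hx
      rw [hcj x hx x0 hx0]; ring
    have hne : k0 ≠ j := by
      intro h
      have h6 := congrArg Fin.val h
      rw [hj] at h6
      have h7 : (0 : ℕ) = 1 := h6
      norm_num at h7
    have horth0j := horth k0 j
    rw [if_neg hne] at horth0j
    have hpair := hsum_pair k0 j g0 g hg0 hg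
    have h4 : ∑ x ∈ U, (∑ y ∈ U, w x y) * (g0 x * g x) = 0 := by
      rw [← hpair]; exact horth0j
    have hD01 : g0 x0 * g x0 * (∑ x ∈ U, (∑ y ∈ U, w x y)) = 0 := by
      rw [← h4, Finset.mul_sum]
      apply Finset.sum_congr rfl; intro x hx
      rw [hc0 x hx x0 hx0, hcj x hx x0 hx0]; ring
    have h5 : (g0 x0 * g x0 * (∑ x ∈ U, (∑ y ∈ U, w x y))) ^ 2
        = (g0 x0 ^ 2 * (∑ x ∈ U, (∑ y ∈ U, w x y)))
          * (g x0 ^ 2 * (∑ x ∈ U, (∑ y ∈ U, w x y))) := by ring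
    rw [hD01, hD0, hDj] at h5
    norm_num at h5
  · -- main case: the eigenvector is orthogonal to √d
    have hortho := orth_aux w U hsymm hwhat (lam j) (u j) (heig j) hμ
    have hdg0 : ∑ x ∈ U, (∑ y ∈ U, w x y) * g x = 0 := by
      rw [← Finset.sum_coe_sort U (fun x => (∑ y ∈ U, w x y) * g x), ← hortho]
      apply Finset.sum_congr rfl; intro x _
      have h2 : u j x = Real.sqrt (∑ x' ∈ U, w x.1 x') * g x.1 := hg x.1 x.2
      rw [h2, show Real.sqrt (∑ x' ∈ U, w x.1 x') *
          (Real.sqrt (∑ x' ∈ U, w x.1 x') * g x.1)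
        = Real.sqrt (∑ x' ∈ U, w x.1 x') * Real.sqrt (∑ x' ∈ U, w x.1 x') * g x.1
        from by ring, Real.mul_self_sqrt (hwhat x.1 x.2).le]
    -- both sign classes are nonempty
    have hPex : ∃ x ∈ U, 0 < g x := by
      by_contra hc
      push_neg at hc
      have hz : ∀ x ∈ U, (∑ y ∈ U, w x y) * g x = 0 := by
        have hnp : ∀ a ∈ U, (∑ y ∈ U, w a y) * g a ≤ 0 := by
          intro a ha
          have h6 := mul_le_mul_of_nonneg_left (hc a ha)
            (Finset.sum_nonneg fun y (_ : y ∈ U) => hnonneg a y)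
          rwa [mul_zero] at h6
        exact (Finset.sum_eq_zero_iff_of_nonpos hnp).mp hdg0
      have hgz : ∀ x ∈ U, g x = 0 := by
        intro x hx
        rcases mul_eq_zero.mp (hz x hx) with h | h
        · exact absurd h (ne_of_gt (hwhat x hx))
        · exact h
      have h8 : (1 : ℝ) = 0 := by
        rw [← hnormg]
        apply Finset.sum_eq_zero; intro x hx; rw [hgz x hx]; ring
      norm_num at h8
    have hNex : ∃ x ∈ U, g x < 0 := by
      by_contra hc
      push_neg at hc
      have hz : ∀ x ∈ U, (∑ y ∈ U, w x y) * g x = 0 := by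
        have hnp : ∀ a ∈ U, 0 ≤ (∑ y ∈ U, w a y) * g a := by
          intro a ha
          exact mul_nonneg (Finset.sum_nonneg fun y _ => hnonneg a y) (hc a ha)
        exact (Finset.sum_eq_zero_iff_of_nonneg hnp).mp hdg0
      have hgz : ∀ x ∈ U, g x = 0 := by
        intro x hx
        rcases mul_eq_zero.mp (hz x hx) with h | h
        · exact absurd h (ne_of_gt (hwhat x hx))
        · exact h
      have h8 : (1 : ℝ) = 0 := by
        rw [← hnormg]
        apply Finset.sum_eq_zero; intro x hx; rw [hgz x hx]; ring
      norm_num at h8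
    -- the key reduction to `main_aux`
    have key : ∀ g' : X → ℝ,
        (∀ x ∈ U, ∑ y ∈ U, w x y * g' y = (1 - lam j) * ((∑ y ∈ U, w x y) * g' x)) →
        (∃ x ∈ U, 0 < g' x) →
        (∑ x ∈ U.filter (fun z => 0 < g' z), ∑ x', w x x')
          ≤ (∑ x ∈ U, ∑ x', w x x') / 2 →
        γ ^ 2 / 2 ≤ lam j := by
      intro g' hE' hex hhalf
      apply main_aux w U (lam j) γ hγ hsymm hnonneg g' hE' hex hwhat
      intro A hAU hApos hAne
      have hAP : A ⊆ U.filter (fun z => 0 < g' z) := fun x hx =>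
        Finset.mem_filter.mpr ⟨hAU hx, hApos x hx⟩
      have h1 : ∑ x ∈ A, ∑ x', w x x' ≤ (∑ x ∈ U, ∑ x', w x x') / 2 :=
        le_trans (Finset.sum_le_sum_of_subset_of_nonneg hAP (fun x _ _ => hWnn x)) hhalf
      have h2 := hcheeger A hAU h1
      have h3 : ∑ x ∈ A, (∑ y ∈ U, w x y) ≤ ∑ x ∈ A, ∑ x', w x x' :=
        Finset.sum_le_sum fun x _ => Finset.sum_le_sum_of_subset_of_nonneg
          (Finset.subset_univ U) (fun y _ _ => hnonneg x y)
      have h4 : γ * ∑ x ∈ A, (∑ y ∈ U, w x y) ≤ γ * ∑ x ∈ A, ∑ x', w x x' :=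
        mul_le_mul_of_nonneg_left h3 hγ.le
      linarith
    -- choose the lighter sign class
    have hdisj : Disjoint (U.filter (fun z => 0 < g z)) (U.filter (fun z => g z < 0)) := by
      rw [Finset.disjoint_left]
      intro a haP haN
      rw [Finset.mem_filter] at haP haN
      exact absurd haN.2 (not_lt.mpr haP.2.le)
    have hPN : (∑ x ∈ U.filter (fun z => 0 < g z), ∑ x', w x x')
        + (∑ x ∈ U.filter (fun z => g z < 0), ∑ x', w x x')
        ≤ ∑ x ∈ U, ∑ x', w x x' := by
      rw [← Finset.sum_union hdisj]
      apply Finset.sum_le_sum_of_subset_of_nonneg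
      · exact Finset.union_subset (Finset.filter_subset _ _) (Finset.filter_subset _ _)
      · exact fun x _ _ => hWnn x
    rcases le_or_gt (∑ x ∈ U.filter (fun z => 0 < g z), ∑ x', w x x')
        ((∑ x ∈ U, ∑ x', w x x') / 2) with hc | hc
    · exact key g hE hPex hc
    · have hcN : (∑ x ∈ U.filter (fun z => g z < 0), ∑ x', w x x')
          ≤ (∑ x ∈ U, ∑ x', w x x') / 2 := by linarith
      have hfe : U.filter (fun z => 0 < -g z) = U.filter (fun z => g z < 0) := by
        apply Finset.filter_congr
        intro x _
        simp [neg_pos]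
      apply key (fun x => -g x)
      · intro x hx
        have h5 := hE x hx
        have h6 : ∑ y ∈ U, w x y * -g y = -∑ y ∈ U, w x y * g y := by
          rw [← Finset.sum_neg_distrib]
          apply Finset.sum_congr rfl; intro y _; ring
        rw [h6, h5]; ring
      · obtain ⟨x, hx, hgx⟩ := hNex
        exact ⟨x, hx, neg_pos.mpr hgx⟩
      · rw [hfe]; exact hcN
end
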